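/- arXiv:math/9905138 — 11 statements merged into one kernel-verified Lean document; each statement's English description precedes it below -/
import Mathlib

section
/- Let R be a commutative ring with identity and let A, B be elements of SL(2,R). Then tr(A)² + tr(B)² + tr(AB)² − tr(A)·tr(B)·tr(AB) = tr(ABA⁻¹B⁻¹) + 2. -/
/-- `SL(2,K)`: 2×2 matrices of determinant 1. -/
abbrev SL2 (K : Type*) [CommRing K] := Matrix.SpecialLinearGroup (Fin 2) K

/-- A field is quadratically closed if every monic quadratic has a root. -/
def QuadClosed (K : Type*) [Field K] : Prop :=
  ∀ a b : K, ∃ x : K, x ^ 2 + a * x + b = 0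

/-- The trace of an element of `SL(2,K)`. -/
def trM {K : Type*} [CommRing K] (A : SL2 K) : K :=
  Matrix.trace (A : Matrix (Fin 2) (Fin 2) K)

/-- `f : G → K` is an `SL(2,K)` character: the trace function of some representation. -/
def IsSL2Character {K : Type*} [CommRing K] {G : Type*} [Group G] (f : G → K) : Prop :=
  ∃ ρ : G →* SL2 K, ∀ g : G, f g = trM (ρ g)

/-- A subgroup of `SL(2,K)` is reducible if some 1-dimensional subspace (the span of a
nonzero vector `v`) is invariant under all its elements. -/
def IsReducibleSubgroup {K : Type*} [Field K] (H : Subgroup (SL2 K)) : Prop :=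
  ∃ v : Fin 2 → K, v ≠ 0 ∧ ∀ A ∈ H, ∃ c : K,
    Matrix.mulVec (A : Matrix (Fin 2) (Fin 2) K) v = c • v

/-- A representation to `SL(2,K)` is reducible if some 1-dimensional subspace is invariant
under the image. -/
def IsReducibleRep {K : Type*} [Field K] {G : Type*} [Group G] (ρ : G →* SL2 K) : Prop :=
  ∃ v : Fin 2 → K, v ≠ 0 ∧ ∀ g : G, ∃ c : K,
    Matrix.mulVec ((ρ g : SL2 K) : Matrix (Fin 2) (Fin 2) K) v = c • v

theorem trace_identity_commutator {R : Type*} [CommRing R] (A B : SL2 R) :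
    trM A ^ 2 + trM B ^ 2 + trM (A * B) ^ 2 - trM A * trM B * trM (A * B) =
      trM (A * B * A⁻¹ * B⁻¹) + 2 := by
  have hA := A.2
  have hB := B.2
  rw [Matrix.det_fin_two] at hA hB
  set a := (A : Matrix (Fin 2) (Fin 2) R) 0 0 with ha
  set b := (A : Matrix (Fin 2) (Fin 2) R) 0 1 with hb
  set c := (A : Matrix (Fin 2) (Fin 2) R) 1 0 with hc
  set d := (A : Matrix (Fin 2) (Fin 2) R) 1 1 with hd
  set e := (B : Matrix (Fin 2) (Fin 2) R) 0 0 with he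
  set f := (B : Matrix (Fin 2) (Fin 2) R) 0 1 with hf
  set g := (B : Matrix (Fin 2) (Fin 2) R) 1 0 with hg
  set h := (B : Matrix (Fin 2) (Fin 2) R) 1 1 with hh
  simp only [trM, Matrix.SpecialLinearGroup.coe_mul, Matrix.SpecialLinearGroup.coe_inv,
    Matrix.adjugate_fin_two, Matrix.trace_fin_two, Matrix.mul_apply, Fin.sum_univ_two,
    Matrix.of_apply, Matrix.cons_val', Matrix.cons_val_zero, Matrix.cons_val_one,
    Matrix.head_cons, Matrix.empty_val', Matrix.cons_val_fin_one, Matrix.head_fin_const,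
    ← ha, ← hb, ← hc, ← hd, ← he, ← hf, ← hg, ← hh]
  linear_combination (2 - (e + h) ^ 2) * hA - (a ^ 2 + 2 * b * c + d ^ 2) * hB
end

section
/- Let R be a commutative ring with identity and let A₁, A₂, A₃ be elements of SL(2,R). Set P = tr(A₁)·tr(A₂A₃) + tr(A₂)·tr(A₃A₁) + tr(A₃)·tr(A₁A₂) − tr(A₁)·tr(A₂)·tr(A₃) and Q = (tr(A₁)² + tr(A₁A₂)² − tr(A₁)tr(A₂)tr(A₁A₂)) + (tr(A₂)² + tr(A₂A₃)² − tr(A₂)tr(A₃)tr(A₂A₃)) + (tr(A₃)² + tr(A₃A₁)² − tr(A₃)tr(A₁)tr(A₃A₁)) + tr(A₁A₂)·tr(A₂A₃)·tr(A₃A₁) − 4. Then tr(A₁A₂A₃) + tr(A₁⁻¹A₂⁻¹A₃⁻¹) = P and tr(A₁A₂A₃)·tr(A₁⁻¹A₂⁻¹A₃⁻¹) = Q; that is, tr(A₁A₂A₃) and tr(A₁⁻¹A₂⁻¹A₃⁻¹) are the two roots of the quadratic equation x² − P·x + Q = 0. -/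
theorem trace_identity_triple {R : Type*} [CommRing R] (A₁ A₂ A₃ : SL2 R) :
    trM (A₁ * A₂ * A₃) + trM (A₁⁻¹ * A₂⁻¹ * A₃⁻¹) =
        trM A₁ * trM (A₂ * A₃) + trM A₂ * trM (A₃ * A₁) + trM A₃ * trM (A₁ * A₂) -
          trM A₁ * trM A₂ * trM A₃ ∧
      trM (A₁ * A₂ * A₃) * trM (A₁⁻¹ * A₂⁻¹ * A₃⁻¹) =
        (trM A₁ ^ 2 + trM (A₁ * A₂) ^ 2 - trM A₁ * trM A₂ * trM (A₁ * A₂)) +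
          (trM A₂ ^ 2 + trM (A₂ * A₃) ^ 2 - trM A₂ * trM A₃ * trM (A₂ * A₃)) +
          (trM A₃ ^ 2 + trM (A₃ * A₁) ^ 2 - trM A₃ * trM A₁ * trM (A₃ * A₁)) +
          trM (A₁ * A₂) * trM (A₂ * A₃) * trM (A₃ * A₁) - 4 := by

  set a := (A₁ : Matrix (Fin 2) (Fin 2) R) 0 0 with ha
  set b := (A₁ : Matrix (Fin 2) (Fin 2) R) 0 1 with hb
  set c := (A₁ : Matrix (Fin 2) (Fin 2) R) 1 0 with hc
  set d := (A₁ : Matrix (Fin 2) (Fin 2) R) 1 1 with hd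
  set e := (A₂ : Matrix (Fin 2) (Fin 2) R) 0 0 with he
  set f := (A₂ : Matrix (Fin 2) (Fin 2) R) 0 1 with hf
  set g := (A₂ : Matrix (Fin 2) (Fin 2) R) 1 0 with hg
  set h := (A₂ : Matrix (Fin 2) (Fin 2) R) 1 1 with hh
  set i' := (A₃ : Matrix (Fin 2) (Fin 2) R) 0 0 with hi
  set j' := (A₃ : Matrix (Fin 2) (Fin 2) R) 0 1 with hj
  set k' := (A₃ : Matrix (Fin 2) (Fin 2) R) 1 0 with hk
  set l' := (A₃ : Matrix (Fin 2) (Fin 2) R) 1 1 with hl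
  have h1 : a * d - b * c = 1 := by
    have := A₁.2; rw [Matrix.det_fin_two] at this; simpa [ha, hb, hc, hd] using this
  have h2 : e * h - f * g = 1 := by
    have := A₂.2; rw [Matrix.det_fin_two] at this; simpa [he, hf, hg, hh] using this
  have h3 : i' * l' - j' * k' = 1 := by
    have := A₃.2; rw [Matrix.det_fin_two] at this; simpa [hi, hj, hk, hl] using this
  simp only [trM, Matrix.SpecialLinearGroup.coe_mul, Matrix.SpecialLinearGroup.coe_inv,
    Matrix.adjugate_fin_two, Matrix.trace_fin_two, Matrix.mul_apply, Fin.sum_univ_two,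
    Matrix.cons_val', Matrix.cons_val_zero, Matrix.cons_val_one, Matrix.head_cons,
    Matrix.head_fin_const, Matrix.empty_val', Matrix.cons_val_fin_one, Matrix.of_apply,
    ← ha, ← hb, ← hc, ← hd, ← he, ← hf, ← hg, ← hh, ← hi, ← hj, ← hk, ← hl]
  constructor
  · ring
  · linear_combination
      (-2 + 1*l'*l' + 1*i'*i' + 1*h*h + -1*h*h*i'*l' + 1*g*h*j'*l' + -1*g*h*i'*j' + 1*g*g*j'*j' + 1*f*h*k'*l' + -1*f*h*i'*k' + 1*f*f*k'*k' + -1*e*h*l'*l' + 2*e*h*i'*l' + -1*e*h*i'*i' + -1*e*g*j'*l' + 1*e*g*i'*j' + -1*e*f*k'*l' + 1*e*f*i'*k' + 1*e*e + -1*e*e*i'*l') * h1 +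
      (-2 + 2*i'*l' + 1*d*d + -1*d*d*i'*l' + 1*c*d*j'*l' + -1*c*d*i'*j' + 1*c*c*j'*j' + 1*b*d*k'*l' + -1*b*d*i'*k' + -1*b*c*l'*l' + 2*b*c*i'*l' + -1*b*c*i'*i' + 1*b*b*k'*k' + -1*a*c*j'*l' + 1*a*c*i'*j' + -1*a*b*k'*l' + 1*a*b*i'*k' + 1*a*a + -1*a*a*i'*l') * h2 +
      (2*f*g + -1*d*d*f*g + 1*c*d*f*h + -1*c*d*e*f + 1*c*c*f*f + 1*b*d*g*h + -1*b*d*e*g + 2*b*c + -1*b*c*h*h + 2*b*c*f*g + -1*b*c*e*e + 1*b*b*g*g + -1*a*c*f*h + 1*a*c*e*f + -1*a*b*g*h + 1*a*b*e*g + -1*a*a*f*g) * h3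
end

section
/- Fix a natural number n and an element w of the free group on n generators x₁, …, xₙ. There exists a polynomial P with integer coefficients in variables indexed by the nonempty subsets {i₁ < i₂ < … < i_k} of {1, …, n} such that for every commutative ring R with identity and every n-tuple A₁, …, Aₙ of elements of SL(2,R), the trace of the matrix obtained by substituting A_i for x_i in w equals the evaluation of P at the values tr(A_{i₁}A_{i₂}⋯A_{i_k}) (as the index ranges over all nonempty subsets {i₁ < … < i_k} of {1, …, n}). -/
/-!
Fricke's trace identities in `SL(2)`,
`tr(X a⁻¹) = tr X tr a - tr(X a)`, `tr(X a a) = tr(X a) tr a - tr X` and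
`tr(X a b) + tr(X b a) = tr b tr(X a) + tr a tr(X b) + (tr(a b) - tr a tr b) tr X`,
together with invariance of the trace under cyclic rotation, rewrite the trace of any word as a
polynomial in traces of words that are shorter, have fewer inverse letters, or have fewer
inversions. Hence in every `SL(2,R)` the trace of a word lies in the subring generated by the
traces of the ordered products over nonempty subsets. Applying this to the generic tuple, with
entries the coordinate functions on the set of all tuples over all rings, yields one integer
polynomial that specializes correctly everywhere.
-/

open Matrix MvPolynomial

section TraceIdentities

variable {R : Type*} [CommRing R]

lemma trM_mul_comm (U V : SL2 R) : trM (U * V) = trM (V * U) :=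
  Matrix.trace_mul_comm (U : Matrix (Fin 2) (Fin 2) R) V

lemma trM_one : trM (1 : SL2 R) = 2 := by
  simp [trM]

lemma trM_inv (a : SL2 R) : trM a⁻¹ = trM a := by
  simp [trM, adjugate_fin_two, trace_fin_two, add_comm]

lemma trM_mul_inv (X a : SL2 R) : trM (X * a⁻¹) = trM X * trM a - trM (X * a) := by
  simp [trM, adjugate_fin_two, trace_fin_two, mul_apply]
  ring

lemma trM_mul_mul_self (X a : SL2 R) : trM (X * a * a) = trM (X * a) * trM a - trM X := by
  simpa [trM_inv] using trM_mul_inv (X * a) a⁻¹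

lemma trM_mul_mul_add_trM_mul_mul_swap (X a b : SL2 R) :
    trM (X * a * b) + trM (X * b * a) =
      trM b * trM (X * a) + trM a * trM (X * b) + (trM (a * b) - trM a * trM b) * trM X := by
  simp [trM, trace_fin_two, mul_apply]
  ring

end TraceIdentities

namespace List

variable {α : Type*} [LinearOrder α]

def inversions : List α → ℕ
  | [] => 0
  | a :: t => t.countP (· < a) + inversions t

lemma inversions_swap_lt (u : List α) {a b : α} (v : List α) (hba : b < a) :
    inversions (u ++ b :: a :: v) < inversions (u ++ a :: b :: v) := by
  induction u with
  | nil =>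
    simp [inversions, hba, not_lt_of_gt hba]
    omega
  | cons c u ih =>
    have hc : (u ++ b :: a :: v).countP (· < c) = (u ++ a :: b :: v).countP (· < c) := by
      simp [countP_append, countP_cons]
      ring
    simp only [cons_append, inversions, hc]
    omega

end List

section Words

variable {G : Type*} [Group G] {ι : Type*}

def wordProd (A : ι → G) (q : List (ι × Bool)) : G :=
  (q.map fun p => cond p.2 (A p.1) (A p.1)⁻¹).prod

@[simp] lemma wordProd_nil (A : ι → G) : wordProd A [] = 1 := rfl

@[simp] lemma wordProd_cons (A : ι → G) (i : ι) (b : Bool) (q : List (ι × Bool)) :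
    wordProd A ((i, b) :: q) = cond b (A i) (A i)⁻¹ * wordProd A q := rfl

@[simp] lemma wordProd_append (A : ι → G) (q r : List (ι × Bool)) :
    wordProd A (q ++ r) = wordProd A q * wordProd A r := by
  simp [wordProd]

lemma wordProd_singleton (A : ι → G) (i : ι) (b : Bool) :
    wordProd A [(i, b)] = cond b (A i) (A i)⁻¹ :=
  mul_one _

lemma wordProd_pair (A : ι → G) (a b : ι) : wordProd A [(a, true), (b, true)] = A a * A b := by
  simp

lemma wordProd_map_true (A : ι → G) (l : List ι) :
    wordProd A (l.map (·, true)) = (l.map A).prod := by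
  induction l <;> simp_all

lemma lift_eq_wordProd_toWord [DecidableEq ι] (A : ι → G) (w : FreeGroup ι) :
    FreeGroup.lift A w = wordProd A w.toWord := by
  conv_lhs => rw [← FreeGroup.mk_toWord (x := w)]
  exact FreeGroup.lift_mk

lemma trM_wordProd_rotate {R : Type*} [CommRing R] (A : ι → SL2 R)
    (u w v : List (ι × Bool)) :
    trM (wordProd A (u ++ w ++ v)) = trM (wordProd A (v ++ u) * wordProd A w) := by
  simp only [wordProd_append]
  rw [trM_mul_comm, ← mul_assoc]

end Words

section WordTraces

variable {R : Type*} [CommRing R] {ι : Type*} [LinearOrder ι]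

lemma exists_inv_letter_or_adjacent_ge_or_pairwise_lt (q : List (ι × Bool)) :
    (∃ u i v, q = u ++ [(i, false)] ++ v) ∨
    (∃ u a b v, q = u ++ [(a, true), (b, true)] ++ v ∧ b ≤ a) ∨
    (∃ l : List ι, q = l.map (·, true) ∧ l.Pairwise (· < ·)) := by
  induction q with
  | nil => exact .inr (.inr ⟨[], rfl, .nil⟩)
  | cons p t ih =>
    obtain ⟨i, _ | _⟩ := p
    · exact .inl ⟨[], i, t, rfl⟩
    rcases ih with ⟨u, j, v, rfl⟩ | ⟨u, a, b, v, rfl, hab⟩ | ⟨_ | ⟨j, l⟩, rfl, hl⟩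
    · exact .inl ⟨(i, true) :: u, j, v, rfl⟩
    · exact .inr (.inl ⟨(i, true) :: u, a, b, v, rfl, hab⟩)
    · exact .inr (.inr ⟨[i], rfl, List.pairwise_singleton _ _⟩)
    by_cases hij : i < j
    · refine .inr (.inr ⟨i :: j :: l, rfl, List.pairwise_cons.2 ⟨?_, hl⟩⟩)
      rintro k (_ | ⟨_, hk⟩)
      exacts [hij, hij.trans (List.rel_of_pairwise_cons hl hk)]
    · exact .inr (.inl ⟨[], i, j, l.map (·, true), rfl, not_lt.1 hij⟩)

def subsetTrace (A : ι → SL2 R) (s : {s : Finset ι // s.Nonempty}) : R :=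
  trM (((s.1.sort (· ≤ ·)).map A).prod)

def subsetTraceAlgebra (A : ι → SL2 R) : Subalgebra ℤ R :=
  Algebra.adjoin ℤ (Set.range (subsetTrace A))

variable (A : ι → SL2 R)

lemma trM_prod_mem_subsetTraceAlgebra {l : List ι} (hne : l ≠ []) (hl : l.Pairwise (· < ·)) :
    trM (l.map A).prod ∈ subsetTraceAlgebra A := by
  have hsort : l.toFinset.sort (· ≤ ·) = l :=
    (List.toFinset_sort _ hl.nodup).2 (hl.imp le_of_lt)
  exact Algebra.subset_adjoin ⟨⟨l.toFinset, List.toFinset_nonempty_iff _ |>.2 hne⟩,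
    by simp only [subsetTrace, hsort]⟩

lemma trM_mem_subsetTraceAlgebra (i : ι) : trM (A i) ∈ subsetTraceAlgebra A := by
  simpa using trM_prod_mem_subsetTraceAlgebra A (l := [i]) (by simp) (by simp)

theorem trM_wordProd_mem_subsetTraceAlgebra (q : List (ι × Bool)) :
    trM (wordProd A q) ∈ subsetTraceAlgebra A := by
  rcases exists_inv_letter_or_adjacent_ge_or_pairwise_lt q with
    ⟨u, i, v, rfl⟩ | ⟨u, a, b, v, rfl, hba⟩ | ⟨l, rfl, hl⟩
  · have hX := trM_wordProd_mem_subsetTraceAlgebra (v ++ u)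
    have hXa := trM_wordProd_mem_subsetTraceAlgebra (v ++ u ++ [(i, true)])
    rw [wordProd_append, wordProd_singleton, cond_true] at hXa
    rw [trM_wordProd_rotate, wordProd_singleton, cond_false, trM_mul_inv]
    exact sub_mem (mul_mem hX (trM_mem_subsetTraceAlgebra A i)) hXa
  · have hX := trM_wordProd_mem_subsetTraceAlgebra (v ++ u)
    have hXa := trM_wordProd_mem_subsetTraceAlgebra (v ++ u ++ [(a, true)])
    rw [wordProd_append, wordProd_singleton, cond_true] at hXa
    rw [trM_wordProd_rotate, wordProd_pair, ← mul_assoc]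
    rcases hba.lt_or_eq with hba | rfl
    · have hXb := trM_wordProd_mem_subsetTraceAlgebra (v ++ u ++ [(b, true)])
      have hXba := trM_wordProd_mem_subsetTraceAlgebra (u ++ [(b, true), (a, true)] ++ v)
      rw [wordProd_append, wordProd_singleton, cond_true] at hXb
      rw [trM_wordProd_rotate, wordProd_pair, ← mul_assoc] at hXba
      have hab : trM (A a * A b) ∈ subsetTraceAlgebra A := by
        rw [trM_mul_comm]
        simpa only [List.map_cons, List.map_nil, List.prod_cons, List.prod_nil, mul_one] using
          trM_prod_mem_subsetTraceAlgebra A (l := [b, a]) (by simp) (by simp [hba])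
      have ha := trM_mem_subsetTraceAlgebra A a
      have hb := trM_mem_subsetTraceAlgebra A b
      rw [eq_sub_of_add_eq (trM_mul_mul_add_trM_mul_mul_swap (wordProd A (v ++ u)) (A a) (A b))]
      exact sub_mem (add_mem (add_mem (mul_mem hb hXa) (mul_mem ha hXb))
        (mul_mem (sub_mem hab (mul_mem ha hb)) hX)) hXba
    · rw [trM_mul_mul_self]
      exact sub_mem (mul_mem hXa (trM_mem_subsetTraceAlgebra A b)) hX
  · rw [wordProd_map_true]
    rcases eq_or_ne l [] with rfl | hne
    · rw [List.map_nil, List.prod_nil, trM_one]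
      exact ofNat_mem _ 2
    · exact trM_prod_mem_subsetTraceAlgebra A hne hl
termination_by (q.length, q.countP (fun p => !p.2), (q.map Prod.fst).inversions)
decreasing_by
  all_goals subst_vars; simp [Prod.lex_def, List.countP_append]
  all_goals first | omega | exact List.inversions_swap_lt _ _ ‹b < a›

theorem trM_lift_mem_subsetTraceAlgebra (w : FreeGroup ι) :
    trM (FreeGroup.lift A w) ∈ subsetTraceAlgebra A := by
  rw [lift_eq_wordProd_toWord]
  exact trM_wordProd_mem_subsetTraceAlgebra A _

end WordTraces

section RingHomTransfer

variable {R S : Type*} [CommRing R] [CommRing S] (f : R →+* S) {ι : Type*}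

lemma trM_map (B : SL2 R) : trM (SpecialLinearGroup.map f B) = f (trM B) := by
  simp [trM, trace_fin_two]

lemma trM_lift_map (A : ι → SL2 R) (w : FreeGroup ι) :
    trM (FreeGroup.lift (SpecialLinearGroup.map f ∘ A) w) = f (trM (FreeGroup.lift A w)) := by
  rw [← trM_map, ← FreeGroup.lift_unique ((SpecialLinearGroup.map f).comp (FreeGroup.lift A))
    (by simp)]
  rfl

lemma subsetTrace_map [LinearOrder ι] (A : ι → SL2 R) (s : {s : Finset ι // s.Nonempty}) :
    subsetTrace (SpecialLinearGroup.map f ∘ A) s = f (subsetTrace A s) := by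
  simp [subsetTrace, ← trM_map, map_list_prod, List.map_map]

lemma trM_lift_map_eq_aeval [LinearOrder ι] {A : ι → SL2 R} {w : FreeGroup ι}
    {P : MvPolynomial {s : Finset ι // s.Nonempty} ℤ}
    (h : trM (FreeGroup.lift A w) = aeval (subsetTrace A) P) :
    trM (FreeGroup.lift (SpecialLinearGroup.map f ∘ A) w) =
      aeval (subsetTrace (SpecialLinearGroup.map f ∘ A)) P := by
  rw [trM_lift_map, h, funext (subsetTrace_map f A)]
  exact comp_aeval_apply _ f.toIntAlgHom P

end RingHomTransfer

section Generic

universe u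

variable (ι : Type*)

def genericSL2 (i : ι) : SL2 ((p : Σ R : CommRingCat.{u}, ι → SL2 R) → p.1) :=
  ⟨Matrix.of fun j k p => (p.2 i : Matrix (Fin 2) (Fin 2) p.1) j k, by
    ext p
    simp only [det_fin_two, Pi.sub_apply, Pi.mul_apply, of_apply, Pi.one_apply]
    rw [← det_fin_two]
    exact (p.2 i).det_coe⟩

lemma map_evalRingHom_genericSL2 {R : Type u} [CommRing R] (A : ι → SL2 R) :
    SpecialLinearGroup.map (Pi.evalRingHom _ ⟨CommRingCat.of R, A⟩) ∘ genericSL2 ι = A :=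
  funext fun _ => Subtype.ext rfl

end Generic

theorem trace_of_word_is_polynomial_in_subset_traces (n : ℕ) (w : FreeGroup (Fin n)) :
    ∃ P : MvPolynomial {s : Finset (Fin n) // s.Nonempty} ℤ,
      ∀ (R : Type*) [CommRing R] (A : Fin n → SL2 R),
        trM (FreeGroup.lift A w) =
          MvPolynomial.aeval
            (fun s : {s : Finset (Fin n) // s.Nonempty} =>
              trM (((s.1.sort (· ≤ ·)).map A).prod)) P := by
  obtain ⟨P, hP⟩ : trM (FreeGroup.lift (genericSL2 (Fin n)) w) ∈
      (aeval (R := ℤ) (subsetTrace (genericSL2 (Fin n)))).range := by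
    rw [← Algebra.adjoin_range_eq_range_aeval]
    exact trM_lift_mem_subsetTraceAlgebra _ w
  refine ⟨P, fun R _ A => ?_⟩
  rw [← map_evalRingHom_genericSL2 (Fin n) A]
  exact trM_lift_map_eq_aeval _ hP.symm
end

section
/- Let K be a quadratically closed field. Given any six elements t₁, t₂, t₃, t₁₂, t₂₃, t₃₁ of K, there exist matrices A₁, A₂, A₃ in SL(2,K) such that tr(A₁) = t₁, tr(A₂) = t₂, tr(A₃) = t₃, tr(A₁A₂) = t₁₂, tr(A₂A₃) = t₂₃ and tr(A₃A₁) = t₃₁. -/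
/-!
Write `t₁ = α + α'` and `t₂ = β + β'` with `α α' = β β' = 1`; these are the eigenvalues of `A₁`
and `A₂`. If `t₁₂ = α β + α' β'`, lower triangular `A₁`, `A₂` have the right traces and product
trace whatever their lower left entries are, and these two free entries adjust `tr (A₁ A₃)` and
`tr (A₂ A₃)` for the fixed `A₃ = !![t₃, 1; -1, 0]`. The case `t₁₂ = α β' + α' β` is the same
after swapping `β` and `β'`.

Otherwise take `A₁` lower and `A₂` upper triangular. The three trace conditions on `A₃` are
linear and cut out a line, along which `det A₃` is a quadratic polynomial with leading coefficient
`-(t₁₂ - α β' - α' β) ≠ 0`; quadratic closedness provides a point of the line with `det A₃ = 1`.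
-/

namespace QuadClosed

variable {K : Type*} [Field K]

theorem exists_quadratic_eq_zero (hK : QuadClosed K) {a : K} (ha : a ≠ 0) (b c : K) :
    ∃ x, a * x ^ 2 + b * x + c = 0 := by
  obtain ⟨x, hx⟩ := hK (b / a) (c / a)
  refine ⟨x, ?_⟩
  field_simp at hx
  linear_combination hx

theorem exists_mul_eq_one_and_add_eq (hK : QuadClosed K) (t : K) :
    ∃ α α' : K, α * α' = 1 ∧ α + α' = t := by
  obtain ⟨x, hx⟩ := hK (-t) 1
  exact ⟨x, t - x, by linear_combination -hx, by ring⟩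

end QuadClosed

namespace SL2

variable {K : Type*} [CommRing K]

def of (a b c d : K) (h : a * d - b * c = 1) : SL2 K :=
  ⟨!![a, b; c, d], by rw [Matrix.det_fin_two_of, h]⟩

@[simp]
theorem trM_of (a b c d : K) (h : a * d - b * c = 1) : trM (of a b c d h) = a + d :=
  Matrix.trace_fin_two_of a b c d

@[simp]
theorem trM_of_mul_of (a b c d : K) (h : a * d - b * c = 1) (e f g k : K)
    (h' : e * k - f * g = 1) :
    trM (of a b c d h * of e f g k h') = a * e + b * g + (c * f + d * k) := by
  rw [trM, Matrix.SpecialLinearGroup.coe_mul]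
  exact (congrArg Matrix.trace (Matrix.mul_fin_two a b c d e f g k)).trans
    (Matrix.trace_fin_two_of _ _ _ _)

end SL2

section

variable {K : Type*} [Field K] {α α' β β' : K}

theorem exists_sl2_with_prescribed_traces_of_reducible (hα : α * α' = 1) (hβ : β * β' = 1)
    (t₃ t₂₃ t₃₁ : K) :
    ∃ A₁ A₂ A₃ : SL2 K,
      trM A₁ = α + α' ∧ trM A₂ = β + β' ∧ trM A₃ = t₃ ∧
        trM (A₁ * A₂) = α * β + α' * β' ∧ trM (A₂ * A₃) = t₂₃ ∧ trM (A₃ * A₁) = t₃₁ := by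
  refine ⟨.of α 0 (t₃₁ - α * t₃) α' (by simpa using hα),
    .of β 0 (t₂₃ - β * t₃) β' (by simpa using hβ), .of t₃ 1 (-1) 0 (by ring), ?_⟩
  simp only [SL2.trM_of, SL2.trM_of_mul_of, true_and]
  refine ⟨?_, ?_, ?_, ?_⟩ <;> ring

theorem exists_sl2_with_prescribed_traces_of_irreducible (hK : QuadClosed K)
    (hα : α * α' = 1) (hβ : β * β' = 1) {t₁₂ : K} (h : t₁₂ ≠ α * β + α' * β')
    (h' : t₁₂ ≠ α * β' + α' * β) (t₃ t₂₃ t₃₁ : K) :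
    ∃ A₁ A₂ A₃ : SL2 K,
      trM A₁ = α + α' ∧ trM A₂ = β + β' ∧ trM A₃ = t₃ ∧
        trM (A₁ * A₂) = t₁₂ ∧ trM (A₂ * A₃) = t₂₃ ∧ trM (A₃ * A₁) = t₃₁ := by
  set y := t₁₂ - (α * β + α' * β')
  have hy : y ≠ 0 := sub_ne_zero.2 h
  set a := t₃₁ - α' * t₃
  set b := t₂₃ - β' * t₃
  -- `y * det A₃ - y` as a polynomial in the diagonal entry `p` of `A₃`
  obtain ⟨p, hp⟩ := hK.exists_quadratic_eq_zero (neg_ne_zero.2 (sub_ne_zero.2 h'))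
    (y * t₃ + a * (β - β') + b * (α - α')) (-(a * b) - y)
  refine ⟨.of α 0 y α' (by simpa using hα), .of β 1 0 β' (by simpa using hβ),
    .of p ((a - (α - α') * p) / y) (b - (β - β') * p) (t₃ - p) ?_, ?_⟩
  · field_simp
    linear_combination hp
  simp only [SL2.trM_of, SL2.trM_of_mul_of, true_and]
  refine ⟨by ring, by ring, by ring, ?_⟩
  field_simp
  ring

end

theorem exists_sl2_with_prescribed_traces
    {K : Type*} [Field K] (hK : QuadClosed K)
    (t₁ t₂ t₃ t₁₂ t₂₃ t₃₁ : K) :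
    ∃ A₁ A₂ A₃ : SL2 K,
      trM A₁ = t₁ ∧ trM A₂ = t₂ ∧ trM A₃ = t₃ ∧
        trM (A₁ * A₂) = t₁₂ ∧ trM (A₂ * A₃) = t₂₃ ∧ trM (A₃ * A₁) = t₃₁ := by
  obtain ⟨α, α', hα, rfl⟩ := hK.exists_mul_eq_one_and_add_eq t₁
  obtain ⟨β, β', hβ, rfl⟩ := hK.exists_mul_eq_one_and_add_eq t₂
  by_cases h : t₁₂ = α * β + α' * β'
  · subst h
    exact exists_sl2_with_prescribed_traces_of_reducible hα hβ t₃ t₂₃ t₃₁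
  by_cases h' : t₁₂ = α * β' + α' * β
  · subst h'
    rw [add_comm β]
    exact exists_sl2_with_prescribed_traces_of_reducible hα (by rwa [mul_comm]) t₃ t₂₃ t₃₁
  exact exists_sl2_with_prescribed_traces_of_irreducible hK hα hβ h h' t₃ t₂₃ t₃₁
end

section
/- Let K be a quadratically closed field and A, B ∈ SL(2,K). The subgroup of SL(2,K) generated by A and B is reducible if and only if tr(ABA⁻¹B⁻¹) = 2. -/
section Aux
open Matrix

set_option linter.unusedSectionVars false

variable {K : Type*} [Field K]

lemma vec2_ext {v w : Fin 2 → K} (h0 : v 0 = w 0) (h1 : v 1 = w 1) : v = w :=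
  funext fun i => by fin_cases i <;> assumption

lemma mulVec2 (M : Matrix (Fin 2) (Fin 2) K) (v : Fin 2 → K) :
    M.mulVec v = ![M 0 0 * v 0 + M 0 1 * v 1, M 1 0 * v 0 + M 1 1 * v 1] := by
  refine vec2_ext ?_ ?_ <;>
    simp [Matrix.mulVec, dotProduct, Fin.sum_univ_two]

lemma vec2_ne (v : Fin 2 → K) (h : v ≠ 0) : v 0 ≠ 0 ∨ v 1 ≠ 0 := by
  by_contra hc
  push_neg at hc
  exact h (vec2_ext (by simpa using hc.1) (by simpa using hc.2))

lemma eigen_charpoly {M : Matrix (Fin 2) (Fin 2) K} (hd : M.det = 1) {v : Fin 2 → K}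
    (hv : v ≠ 0) {t : K} (h : M.mulVec v = t • v) :
    t * t - M.trace * t + 1 = 0 := by
  rw [mulVec2] at h
  have h0 : M 0 0 * v 0 + M 0 1 * v 1 = t * v 0 := by
    have := congrFun h 0; simpa using this
  have h1 : M 1 0 * v 0 + M 1 1 * v 1 = t * v 1 := by
    have := congrFun h 1; simpa using this
  rw [Matrix.det_fin_two] at hd
  rw [Matrix.trace_fin_two]
  rcases vec2_ne v hv with h' | h'
  · have : (t * t - (M 0 0 + M 1 1) * t + 1) * v 0 = 0 := by
      linear_combination (M 1 1 - t) * h0 - M 0 1 * h1 - v 0 * hd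
    rcases mul_eq_zero.mp this with h'' | h''
    · exact h''
    · exact absurd h'' h'
  · have : (t * t - (M 0 0 + M 1 1) * t + 1) * v 1 = 0 := by
      linear_combination (M 0 0 - t) * h1 - M 1 0 * h0 - v 1 * hd
    rcases mul_eq_zero.mp this with h'' | h''
    · exact h''
    · exact absurd h'' h'

lemma exists_eigen (hK : QuadClosed K) (M : Matrix (Fin 2) (Fin 2) K) (hd : M.det = 1) :
    ∃ (t : K) (v : Fin 2 → K), v ≠ 0 ∧ M.mulVec v = t • v := by
  obtain ⟨t, ht⟩ := hK (-(M 0 0 + M 1 1)) 1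
  rw [Matrix.det_fin_two] at hd
  have key : (M 0 0 - t) * (M 1 1 - t) = M 0 1 * M 1 0 := by linear_combination ht + hd
  by_cases h01 : M 0 1 = 0
  · by_cases h00 : M 0 0 = t
    · by_cases h10 : M 1 0 = 0
      · refine ⟨M 1 1, ![0, 1], ?_, ?_⟩
        · intro hc; have := congrFun hc 1; simp at this
        · rw [mulVec2]; refine vec2_ext ?_ ?_ <;> simp [h01, h10]
      · refine ⟨t, ![M 1 1 - t, -(M 1 0)], ?_, ?_⟩
        · intro hc; have := congrFun hc 1; simp [h10] at this
        · rw [mulVec2]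
          refine vec2_ext ?_ ?_ <;>
            simp only [Matrix.cons_val_zero, Matrix.cons_val_one, Matrix.head_cons,
              Pi.smul_apply, smul_eq_mul]
          · linear_combination key
          · ring
    · refine ⟨t, ![M 0 1, t - M 0 0], ?_, ?_⟩
      · intro hc; have := congrFun hc 1
        simp only [Matrix.cons_val_one, Matrix.head_cons, Pi.zero_apply] at this
        exact h00 (sub_eq_zero.mp this).symm
      · rw [mulVec2]
        refine vec2_ext ?_ ?_ <;>
          simp only [Matrix.cons_val_zero, Matrix.cons_val_one, Matrix.head_cons,
            Pi.smul_apply, smul_eq_mul]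
        · ring
        · linear_combination -key
  · refine ⟨t, ![M 0 1, t - M 0 0], ?_, ?_⟩
    · intro hc; have := congrFun hc 0; simp [h01] at this
    · rw [mulVec2]
      refine vec2_ext ?_ ?_ <;>
        simp only [Matrix.cons_val_zero, Matrix.cons_val_one, Matrix.head_cons,
          Pi.smul_apply, smul_eq_mul]
      · ring
      · linear_combination -key

/-- Eigenvalues of det-1 matrices are nonzero, and the adjugate has reciprocal eigenvalue. -/
lemma adj_eigen {M : Matrix (Fin 2) (Fin 2) K} (hd : M.det = 1) {v : Fin 2 → K}
    (hv : v ≠ 0) {t : K} (h : M.mulVec v = t • v) :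
    t ≠ 0 ∧ M.adjugate.mulVec v = t⁻¹ • v := by
  have ht : t ≠ 0 := by
    intro h0
    have := eigen_charpoly hd hv h
    rw [h0] at this
    simp at this
  refine ⟨ht, ?_⟩
  have h1 : M.adjugate.mulVec (M.mulVec v) = v := by
    rw [Matrix.mulVec_mulVec, Matrix.adjugate_mul, hd, one_smul, Matrix.one_mulVec]
  rw [h, Matrix.mulVec_smul] at h1
  calc M.adjugate.mulVec v = (t⁻¹ * t) • M.adjugate.mulVec v := by
        rw [inv_mul_cancel₀ ht, one_smul]
    _ = t⁻¹ • (t • M.adjugate.mulVec v) := by rw [mul_smul]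
    _ = t⁻¹ • v := by rw [h1]

/-- A common eigenvector of `A` and `B` is an eigenvector of everything in the closure. -/
lemma closure_red (A B : Matrix.SpecialLinearGroup (Fin 2) K) (v : Fin 2 → K) (hv : v ≠ 0)
    (hA : ∃ c : K, Matrix.mulVec (A : Matrix (Fin 2) (Fin 2) K) v = c • v)
    (hB : ∃ c : K, Matrix.mulVec (B : Matrix (Fin 2) (Fin 2) K) v = c • v) :
    ∀ M ∈ Subgroup.closure ({A, B} : Set (Matrix.SpecialLinearGroup (Fin 2) K)),
      ∃ c : K, Matrix.mulVec (M : Matrix (Fin 2) (Fin 2) K) v = c • v := by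
  intro M hM
  induction hM using Subgroup.closure_induction with
  | mem x hx =>
    rcases hx with h | h
    · subst h; exact hA
    · rw [Set.mem_singleton_iff] at h; subst h; exact hB
  | one => exact ⟨1, by simp [Matrix.one_mulVec]⟩
  | mul x y hx hy ihx ihy =>
    obtain ⟨c, hc⟩ := ihx
    obtain ⟨d, hd⟩ := ihy
    refine ⟨c * d, ?_⟩
    rw [Matrix.SpecialLinearGroup.coe_mul, ← Matrix.mulVec_mulVec, hd,
      Matrix.mulVec_smul, hc, smul_smul, mul_comm]
  | inv x hx ihx =>
    obtain ⟨c, hc⟩ := ihx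
    refine ⟨c⁻¹, ?_⟩
    rw [Matrix.SpecialLinearGroup.coe_inv]
    exact (adj_eigen x.2 hv hc).2

/-- Transport an eigenvector through a change of basis. -/
lemma transport {P Q a : Matrix (Fin 2) (Fin 2) K} (hPQ : P * Q = 1)
    {w : Fin 2 → K} {c : K} (h : (Q * a * P).mulVec w = c • w) :
    a.mulVec (P.mulVec w) = c • P.mulVec w := by
  have : P.mulVec ((Q * a * P).mulVec w) = (a * P).mulVec w := by
    rw [Matrix.mulVec_mulVec, ← mul_assoc, ← mul_assoc, hPQ, one_mul]
  rw [h, Matrix.mulVec_smul] at this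
  rw [Matrix.mulVec_mulVec]
  exact this.symm

lemma key_reducible (hK : QuadClosed K) (a b : Matrix (Fin 2) (Fin 2) K)
    (ha : a.det = 1) (hb : b.det = 1)
    (htr : (a * b * a.adjugate * b.adjugate).trace = 2) :
    ∃ v : Fin 2 → K, v ≠ 0 ∧ (∃ c : K, a.mulVec v = c • v) ∧ (∃ c : K, b.mulVec v = c • v) := by
  obtain ⟨t, v, hv, hav⟩ := exists_eigen hK a ha
  obtain ⟨P, hPd, hPv⟩ : ∃ P : Matrix (Fin 2) (Fin 2) K,
      P.det ≠ 0 ∧ P.mulVec ![1, 0] = v := by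
    rcases vec2_ne v hv with h | h
    · refine ⟨!![v 0, 0; v 1, 1], by rw [Matrix.det_fin_two_of]; simpa, ?_⟩
      rw [mulVec2]; refine vec2_ext ?_ ?_ <;> simp
    · refine ⟨!![v 0, 1; v 1, 0], by rw [Matrix.det_fin_two_of]; simpa, ?_⟩
      rw [mulVec2]; refine vec2_ext ?_ ?_ <;> simp
  obtain ⟨Q, hQP, hPQ⟩ : ∃ Q : Matrix (Fin 2) (Fin 2) K, Q * P = 1 ∧ P * Q = 1 := by
    refine ⟨P.det⁻¹ • P.adjugate, ?_, ?_⟩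
    · rw [Matrix.smul_mul, Matrix.adjugate_mul, smul_smul, inv_mul_cancel₀ hPd, one_smul]
    · rw [Matrix.mul_smul, Matrix.mul_adjugate, smul_smul, inv_mul_cancel₀ hPd, one_smul]
  obtain ⟨A', hA'⟩ : ∃ A', A' = Q * a * P := ⟨_, rfl⟩
  obtain ⟨B', hB'⟩ : ∃ B', B' = Q * b * P := ⟨_, rfl⟩
  have hdQP : Q.det * P.det = 1 := by rw [← Matrix.det_mul, hQP, Matrix.det_one]
  have hdA' : A'.det = 1 := by
    rw [hA', Matrix.det_mul, Matrix.det_mul, ha, mul_one, hdQP]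
  have hdB' : B'.det = 1 := by
    rw [hB', Matrix.det_mul, Matrix.det_mul, hb, mul_one, hdQP]
  have adj_of : ∀ (M N : Matrix (Fin 2) (Fin 2) K), M.det = 1 → M * N = 1 →
      M.adjugate = N := by
    intro M N h1 h2
    calc M.adjugate = M.adjugate * (M * N) := by rw [h2, mul_one]
      _ = (M.adjugate * M) * N := by rw [mul_assoc]
      _ = N := by rw [Matrix.adjugate_mul, h1, one_smul, one_mul]
  have hcomb : ∀ (X Y : Matrix (Fin 2) (Fin 2) K),
      (Q * X * P) * (Q * Y * P) = Q * (X * Y) * P := by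
    intro X Y
    simp only [mul_assoc]
    rw [← mul_assoc P Q, hPQ, one_mul]
  have haa : a * a.adjugate = 1 := by rw [Matrix.mul_adjugate, ha, one_smul]
  have hbb : b * b.adjugate = 1 := by rw [Matrix.mul_adjugate, hb, one_smul]
  have hadjA' : A'.adjugate = Q * a.adjugate * P := by
    refine adj_of _ _ hdA' ?_
    rw [hA', hcomb, haa]
    simp only [mul_assoc]
    rw [one_mul, hQP]
  have hadjB' : B'.adjugate = Q * b.adjugate * P := by
    refine adj_of _ _ hdB' ?_
    rw [hB', hcomb, hbb]
    simp only [mul_assoc]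
    rw [one_mul, hQP]
  have htr' : (A' * B' * A'.adjugate * B'.adjugate).trace = 2 := by
    rw [hadjA', hadjB', hA', hB', hcomb, hcomb, hcomb, Matrix.trace_mul_comm,
      ← mul_assoc, hPQ, one_mul]
    exact htr
  have hA'e0 : A'.mulVec ![(1:K), 0] = t • ![(1:K), 0] := by
    rw [hA', ← Matrix.mulVec_mulVec, ← Matrix.mulVec_mulVec, hPv, hav, Matrix.mulVec_smul,
      ← hPv, Matrix.mulVec_mulVec, hQP, Matrix.one_mulVec]
  have e00 : A' 0 0 = t := by
    have := congrFun hA'e0 0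
    rw [mulVec2] at this
    simpa using this
  have e10 : A' 1 0 = 0 := by
    have := congrFun hA'e0 1
    rw [mulVec2] at this
    simpa using this
  obtain ⟨u, m, hAe⟩ : ∃ u m, A' = !![t, u; 0, m] :=
    ⟨A' 0 1, A' 1 1, by rw [← e00, ← e10]; exact Matrix.eta_fin_two A'⟩
  obtain ⟨p, q, r, s, hBe⟩ : ∃ p q r s, B' = !![p, q; r, s] :=
    ⟨_, _, _, _, Matrix.eta_fin_two B'⟩
  have hdm : t * m = 1 := by
    rw [hAe, Matrix.det_fin_two_of] at hdA'
    linear_combination hdA'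
  have hdB : p * s - q * r = 1 := by
    rw [hBe, Matrix.det_fin_two_of] at hdB'
    exact hdB'
  rw [hAe, hBe] at htr'
  simp only [Matrix.adjugate_fin_two_of, Matrix.mul_fin_two, Matrix.trace_fin_two_of] at htr'
  have hC : -(t - m)^2 * q * r + u * r * (t - m) * (p - s) + u^2 * r^2 = 0 := by
    linear_combination htr' - 2 * t * m * hdB - 2 * hdm
  by_cases hr : r = 0
  · have hB'e0 : B'.mulVec ![(1:K), 0] = p • ![(1:K), 0] := by
      rw [hBe, mulVec2]
      refine vec2_ext ?_ ?_ <;> simp [hr]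
    refine ⟨v, hv, ⟨t, hav⟩, ⟨p, ?_⟩⟩
    have := transport hPQ (show (Q * b * P).mulVec ![(1:K), 0] = p • ![(1:K), 0] by
      rw [← hB']; exact hB'e0)
    rw [hPv] at this
    exact this
  · by_cases htm : t = m
    · have h2 : (u * r) * (u * r) = 0 := by
        rw [htm] at hC
        linear_combination hC
      have hu0 : u = 0 := by
        rcases mul_eq_zero.mp (mul_self_eq_zero.mp (by exact h2) ▸ rfl :
            u * r = 0) with h | h
        · exact h
        · exact absurd h hr
      have hA1 : A' = t • 1 := by
        rw [hAe, hu0, ← htm, Matrix.one_fin_two]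
        ext i j
        fin_cases i <;> fin_cases j <;> simp
      have hPAQ : P * A' * Q = a := by
        have h4 : P * A' * Q = (P * Q) * a * (P * Q) := by rw [hA']; noncomm_ring
        rw [h4, hPQ, one_mul, mul_one]
      have ha1 : a = t • 1 := by
        rw [← hPAQ, hA1]
        rw [Matrix.mul_smul, mul_one, Matrix.smul_mul, hPQ]
      obtain ⟨c, w, hw, hbw⟩ := exists_eigen hK b hb
      refine ⟨w, hw, ⟨t, ?_⟩, ⟨c, hbw⟩⟩
      rw [ha1, Matrix.smul_mulVec, Matrix.one_mulVec]
    · have hs : t - m ≠ 0 := sub_ne_zero.mpr htm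
      have hQ0 : q * (t - m)^2 - u * (t - m) * (p - s) - r * u^2 = 0 := by
        have h3 : r * (q * (t - m)^2 - u * (t - m) * (p - s) - r * u^2) = 0 := by
          linear_combination -hC
        rcases mul_eq_zero.mp h3 with h | h
        · exact absurd h hr
        · exact h
      have hA'w : A'.mulVec ![-u, t - m] = m • ![-u, t - m] := by
        rw [hAe, mulVec2]
        refine vec2_ext ?_ ?_ <;>
          simp only [Matrix.cons_val', Matrix.cons_val_zero, Matrix.cons_val_one,
            Matrix.head_cons, Matrix.empty_val', Matrix.cons_val_fin_one, Matrix.of_apply, Matrix.head_fin_const,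
            Pi.smul_apply, smul_eq_mul]
        · ring
        · ring
      have hB'w : B'.mulVec ![-u, t - m] =
          ((r * (-u) + s * (t - m)) / (t - m)) • ![-u, t - m] := by
        rw [hBe, mulVec2]
        refine vec2_ext ?_ ?_ <;>
          simp only [Matrix.cons_val', Matrix.cons_val_zero, Matrix.cons_val_one,
            Matrix.head_cons, Matrix.empty_val', Matrix.cons_val_fin_one, Matrix.of_apply, Matrix.head_fin_const,
            Pi.smul_apply, smul_eq_mul]
        · field_simp
          linear_combination hQ0
        · field_simp
      have hwne : (![-u, t - m] : Fin 2 → K) ≠ 0 := by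
        intro h0
        have := congrFun h0 1
        simp only [Matrix.cons_val_one, Matrix.head_cons, Pi.zero_apply] at this
        exact hs this
      have hPw : P.mulVec ![-u, t - m] ≠ 0 := by
        intro h0
        apply hwne
        have h5 : Q.mulVec (P.mulVec ![-u, t - m]) = ![-u, t - m] := by
          rw [Matrix.mulVec_mulVec, hQP, Matrix.one_mulVec]
        rw [h0, Matrix.mulVec_zero] at h5
        exact h5.symm
      refine ⟨P.mulVec ![-u, t - m], hPw, ⟨m, ?_⟩, ⟨(r * (-u) + s * (t - m)) / (t - m), ?_⟩⟩
      · exact transport hPQ (by rw [← hA']; exact hA'w)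
      · exact transport hPQ (by rw [← hB']; exact hB'w)

end Aux

theorem two_generator_reducible_iff_commutator_trace_two
    {K : Type*} [Field K] (hK : QuadClosed K) (A B : SL2 K) :
    IsReducibleSubgroup (Subgroup.closure ({A, B} : Set (SL2 K))) ↔
      trM (A * B * A⁻¹ * B⁻¹) = 2 := by
  have hcoe : ((A * B * A⁻¹ * B⁻¹ : SL2 K) : Matrix (Fin 2) (Fin 2) K)
      = (A : Matrix (Fin 2) (Fin 2) K) * (B : Matrix (Fin 2) (Fin 2) K)
        * (A : Matrix (Fin 2) (Fin 2) K).adjugate * (B : Matrix (Fin 2) (Fin 2) K).adjugate := by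
    rw [Matrix.SpecialLinearGroup.coe_mul, Matrix.SpecialLinearGroup.coe_mul,
      Matrix.SpecialLinearGroup.coe_mul, Matrix.SpecialLinearGroup.coe_inv,
      Matrix.SpecialLinearGroup.coe_inv]
  constructor
  · rintro ⟨v, hv, h⟩
    obtain ⟨cA, hcA⟩ := h A (Subgroup.subset_closure (Set.mem_insert _ _))
    obtain ⟨cB, hcB⟩ := h B (Subgroup.subset_closure (Set.mem_insert_of_mem _ rfl))
    obtain ⟨hcA0, hadjA⟩ := adj_eigen A.2 hv hcA
    obtain ⟨hcB0, hadjB⟩ := adj_eigen B.2 hv hcB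
    have hMdet : ((A : Matrix (Fin 2) (Fin 2) K) * (B : Matrix (Fin 2) (Fin 2) K)
        * (A : Matrix (Fin 2) (Fin 2) K).adjugate * (B : Matrix (Fin 2) (Fin 2) K).adjugate).det
        = 1 := by
      simp [Matrix.det_mul, Matrix.det_adjugate, A.2, B.2]
    have hMv : ((A : Matrix (Fin 2) (Fin 2) K) * (B : Matrix (Fin 2) (Fin 2) K)
        * (A : Matrix (Fin 2) (Fin 2) K).adjugate
        * (B : Matrix (Fin 2) (Fin 2) K).adjugate).mulVec v = (1 : K) • v := by
      simp only [← Matrix.mulVec_mulVec]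
      rw [hadjB]
      simp only [Matrix.mulVec_smul]
      rw [hadjA]
      simp only [Matrix.mulVec_smul]
      rw [hcB]
      simp only [Matrix.mulVec_smul]
      rw [hcA]
      rw [smul_smul, smul_smul, smul_smul]
      congr 1
      field_simp
    have hch := eigen_charpoly hMdet hv hMv
    show Matrix.trace _ = 2
    rw [hcoe]
    linear_combination -hch
  · intro htr
    have htr' : ((A : Matrix (Fin 2) (Fin 2) K) * (B : Matrix (Fin 2) (Fin 2) K)
        * (A : Matrix (Fin 2) (Fin 2) K).adjugate
        * (B : Matrix (Fin 2) (Fin 2) K).adjugate).trace = 2 := by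
      rw [← hcoe]
      exact htr
    obtain ⟨v, hv, hA, hB⟩ := key_reducible hK _ _ A.2 B.2 htr'
    exact ⟨v, hv, closure_red A B v hv hA hB⟩
end

section
/- Let K be a quadratically closed field and A₁, A₂, A₃ ∈ SL(2,K). The subgroup of SL(2,K) generated by A₁, A₂ and A₃ is reducible if and only if Δ(A₁,A₂) = 0, Δ(A₂,A₃) = 0, Δ(A₃,A₁) = 0 and Δ(A₁, A₁A₂A₃) = 0. -/
/-- `Δ(A,B) = tr(A)² + tr(B)² + tr(AB)² − tr(A)·tr(B)·tr(AB) − 4`. -/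
def Delta {K : Type*} [CommRing K] (A B : SL2 K) : K :=
  trM A ^ 2 + trM B ^ 2 + trM (A * B) ^ 2 - trM A * trM B * trM (A * B) - 4

namespace SL2Red

open Matrix

variable {K : Type*} [Field K]

abbrev M2 (K : Type*) [Field K] := Matrix (Fin 2) (Fin 2) K

/-- The `Δ`-form on plain matrices. -/
def dform (M N : M2 K) : K :=
  M.trace ^ 2 + N.trace ^ 2 + (M * N).trace ^ 2 -
    M.trace * N.trace * (M * N).trace - 4

lemma delta_eq_dform (A B : SL2 K) : Delta A B = dform (A : M2 K) (B : M2 K) := by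
  simp [Delta, dform, trM]

lemma dform_comm (M N : M2 K) : dform M N = dform N M := by
  unfold dform
  rw [Matrix.trace_mul_comm M N]
  ring

/-- cross product of two vectors in `K²`. -/
def cross (u v : Fin 2 → K) : K := u 0 * v 1 - u 1 * v 0

lemma vec_eq_zero_iff (v : Fin 2 → K) : v = 0 ↔ v 0 = 0 ∧ v 1 = 0 := by
  constructor
  · rintro rfl; simp
  · rintro ⟨h0, h1⟩; funext i; fin_cases i <;> simpa

lemma exists_smul_of_cross_eq_zero {u v : Fin 2 → K} (hv : v ≠ 0)
    (h : cross u v = 0) : ∃ c : K, u = c • v := by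
  unfold cross at h
  by_cases h0 : v 0 = 0
  · have h1 : v 1 ≠ 0 := fun h1 => hv ((vec_eq_zero_iff v).mpr ⟨h0, h1⟩)
    refine ⟨u 1 / v 1, ?_⟩
    have hu0 : u 0 = 0 := by
      have hz : u 0 * v 1 = 0 := by rw [h0] at h; linear_combination h
      exact (mul_eq_zero.mp hz).resolve_right h1
    funext i
    fin_cases i
    · show u 0 = u 1 / v 1 * v 0
      rw [hu0, h0, mul_zero]
    · show u 1 = u 1 / v 1 * v 1
      exact (div_mul_cancel₀ _ h1).symm
  · refine ⟨u 0 / v 0, ?_⟩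
    funext i
    fin_cases i
    · show u 0 = u 0 / v 0 * v 0
      exact (div_mul_cancel₀ _ h0).symm
    · show u 1 = u 0 / v 0 * v 1
      rw [div_mul_eq_mul_div, eq_div_iff h0]
      linear_combination -h

lemma smul_vec_ne_zero {v : Fin 2 → K} {c : K} (hc : c ≠ 0) (hv : v ≠ 0) :
    c • v ≠ 0 := by
  intro h
  apply hv
  funext i
  have := congrFun h i
  simp only [Pi.smul_apply, smul_eq_mul, Pi.zero_apply] at this ⊢
  exact (mul_eq_zero.mp this).resolve_left hc

lemma eq_zero_of_smul_eq_zero {v : Fin 2 → K} {c : K} (hv : v ≠ 0)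
    (h : c • v = 0) : c = 0 := by
  by_contra hc
  exact smul_vec_ne_zero hc hv h

/-- An eigenvalue of a determinant-one matrix satisfies `c² − tc + 1 = 0`. -/
lemma eig_quad {A : M2 K} (hdet : A.det = 1) {v : Fin 2 → K} (hv : v ≠ 0) {c : K}
    (h : A *ᵥ v = c • v) : c ^ 2 - A.trace * c + 1 = 0 := by
  have h0 : (A - c • 1) *ᵥ v = 0 := by
    rw [Matrix.sub_mulVec, Matrix.smul_mulVec, Matrix.one_mulVec, h, sub_self]
  have hd : (A - c • 1).det = 0 := Matrix.exists_mulVec_eq_zero_iff.mp ⟨v, hv, h0⟩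
  rw [Matrix.det_fin_two] at hd
  rw [Matrix.det_fin_two] at hdet
  rw [Matrix.trace_fin_two]
  simp only [Matrix.sub_apply, Matrix.smul_apply, Matrix.one_apply_eq,
    Matrix.one_apply_ne, smul_eq_mul, mul_one, mul_zero, sub_zero,
    Fin.zero_eq_one_iff, Fin.one_eq_zero_iff, ne_eq, OfNat.ofNat_ne_one,
    not_false_eq_true] at hd
  linear_combination hd - hdet

lemma eig_ne_zero {t c : K} (h : c ^ 2 - t * c + 1 = 0) : c ≠ 0 := by
  rintro rfl
  simp at h

lemma trace_of_eig {t c : K} (hc : c ≠ 0) (h : c ^ 2 - t * c + 1 = 0) :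
    t = c + c⁻¹ := by
  field_simp
  linear_combination -h

lemma fricke {a b : K} (ha : a ≠ 0) (hb : b ≠ 0) :
    (a + a⁻¹) ^ 2 + (b + b⁻¹) ^ 2 + (a * b + (a * b)⁻¹) ^ 2 -
      (a + a⁻¹) * (b + b⁻¹) * (a * b + (a * b)⁻¹) - 4 = 0 := by
  have hax : a * a⁻¹ = 1 := mul_inv_cancel₀ ha
  have hby : b * b⁻¹ = 1 := mul_inv_cancel₀ hb
  rw [mul_inv]
  linear_combination (2 - b⁻¹ ^ 2 - b ^ 2) * hax + (2 - a ^ 2 - a⁻¹ ^ 2) * hby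

lemma delta_eq_zero_of_common_eig {A B : SL2 K} {v : Fin 2 → K} (hv : v ≠ 0)
    {c d : K} (hA : (A : M2 K) *ᵥ v = c • v) (hB : (B : M2 K) *ᵥ v = d • v) :
    Delta A B = 0 := by
  have hAB : ((A * B : SL2 K) : M2 K) *ᵥ v = (c * d) • v := by
    rw [Matrix.SpecialLinearGroup.coe_mul, ← Matrix.mulVec_mulVec, hB,
      Matrix.mulVec_smul, hA, smul_smul, mul_comm]
  have hcq := eig_quad A.prop hv hA
  have hdq := eig_quad B.prop hv hB
  have hcdq := eig_quad (A * B).prop hv hAB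
  have hc : c ≠ 0 := eig_ne_zero hcq
  have hd : d ≠ 0 := eig_ne_zero hdq
  have h1 : trM A = c + c⁻¹ := trace_of_eig hc hcq
  have h2 : trM B = d + d⁻¹ := trace_of_eig hd hdq
  have h3 : trM (A * B) = c * d + (c * d)⁻¹ :=
    trace_of_eig (mul_ne_zero hc hd) hcdq
  rw [Delta, h1, h2, h3]
  exact fricke hc hd

/-- Eigenvectors exist over a quadratically closed field. -/
lemma exists_eig (hK : QuadClosed K) (A : SL2 K) :
    ∃ (c : K) (v : Fin 2 → K), v ≠ 0 ∧ (A : M2 K) *ᵥ v = c • v ∧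
      c ^ 2 - trM A * c + 1 = 0 := by
  obtain ⟨c, hc⟩ := hK (-(trM A)) 1
  have hq : c ^ 2 - trM A * c + 1 = 0 := by linear_combination hc
  have hdet : ((A : M2 K) - c • 1).det = 0 := by
    have hA : (A : M2 K).det = 1 := A.prop
    rw [Matrix.det_fin_two] at hA ⊢
    have ht : trM A = (A : M2 K) 0 0 + (A : M2 K) 1 1 := Matrix.trace_fin_two _
    simp only [Matrix.sub_apply, Matrix.smul_apply, Matrix.one_apply_eq,
      Matrix.one_apply_ne, smul_eq_mul, mul_one, mul_zero, sub_zero,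
      Fin.zero_eq_one_iff, Fin.one_eq_zero_iff, ne_eq, OfNat.ofNat_ne_one,
      not_false_eq_true]
    rw [ht] at hq
    linear_combination hq + hA
  obtain ⟨v, hv, h0⟩ := Matrix.exists_mulVec_eq_zero_iff.mpr hdet
  refine ⟨c, v, hv, ?_, hq⟩
  rw [Matrix.sub_mulVec, Matrix.smul_mulVec, Matrix.one_mulVec,
    sub_eq_zero] at h0
  exact h0

section ConjMachinery

/-- The matrix with columns `v` and `w`. -/
def col2 (v w : Fin 2 → K) : M2 K := Matrix.of ![![v 0, w 0], ![v 1, w 1]]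

lemma det_col2 (v w : Fin 2 → K) : (col2 v w).det = cross v w := by
  simp [col2, Matrix.det_fin_two, cross]
  ring

lemma col2_mulVec_e0 (v w : Fin 2 → K) : col2 v w *ᵥ ![1, 0] = v := by
  funext i
  fin_cases i <;>
    simp [col2, Matrix.mulVec, dotProduct, Fin.sum_univ_two]

lemma col2_mulVec_e1 (v w : Fin 2 → K) : col2 v w *ᵥ ![0, 1] = w := by
  funext i
  fin_cases i <;>
    simp [col2, Matrix.mulVec, dotProduct, Fin.sum_univ_two] <;> ring

lemma mul_col2 (M : M2 K) (v w : Fin 2 → K) :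
    M * col2 v w = col2 (M *ᵥ v) (M *ᵥ w) := by
  ext i j
  fin_cases i <;> fin_cases j <;>
    simp [col2, Matrix.mul_apply, Matrix.mulVec, dotProduct,
      Fin.sum_univ_two] <;> ring

lemma col2_mul (v w : Fin 2 → K) (x y z t : K) :
    col2 v w * !![x, y; z, t] = col2 (x • v + z • w) (y • v + t • w) := by
  ext i j
  fin_cases i <;> fin_cases j <;>
    simp [col2, Matrix.mul_apply, Fin.sum_univ_two] <;> ring

/-- conjugation. -/
noncomputable def conj (P M : M2 K) : M2 K := P⁻¹ * M * P

lemma conj_mul {P : M2 K} (hP : P.det ≠ 0) (M N : M2 K) :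
    conj P (M * N) = conj P M * conj P N := by
  have h1 : P * P⁻¹ = 1 := Matrix.mul_nonsing_inv P (isUnit_iff_ne_zero.mpr hP)
  have key : P⁻¹ * M * P * (P⁻¹ * N * P) = P⁻¹ * M * (P * P⁻¹) * N * P := by
    noncomm_ring
  rw [conj, conj, conj, key, h1, mul_one]
  noncomm_ring

lemma trace_conj {P : M2 K} (hP : P.det ≠ 0) (M : M2 K) :
    (conj P M).trace = M.trace := by
  have h1 : P * P⁻¹ = 1 := Matrix.mul_nonsing_inv P (isUnit_iff_ne_zero.mpr hP)
  rw [conj, Matrix.trace_mul_comm, ← Matrix.mul_assoc, h1, Matrix.one_mul]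

lemma det_conj {P : M2 K} (hP : P.det ≠ 0) (M : M2 K) :
    (conj P M).det = M.det := by
  rw [conj, Matrix.det_mul, Matrix.det_mul, Matrix.det_nonsing_inv,
    Ring.inverse_eq_inv']
  field_simp

lemma dform_conj {P : M2 K} (hP : P.det ≠ 0) (M N : M2 K) :
    dform (conj P M) (conj P N) = dform M N := by
  unfold dform
  rw [← conj_mul hP, trace_conj hP, trace_conj hP, trace_conj hP]

lemma eig_of_conj_eig {P : M2 K} (hP : P.det ≠ 0) {M : M2 K} {e : Fin 2 → K}
    {c : K} (h : conj P M *ᵥ e = c • e) :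
    M *ᵥ (P *ᵥ e) = c • (P *ᵥ e) := by
  have h1 : P * P⁻¹ = 1 := Matrix.mul_nonsing_inv P (isUnit_iff_ne_zero.mpr hP)
  have h2 : P * (P⁻¹ * M * P) = M * P := by
    rw [← Matrix.mul_assoc, ← Matrix.mul_assoc, h1, Matrix.one_mul]
  calc M *ᵥ (P *ᵥ e) = (M * P) *ᵥ e := by rw [Matrix.mulVec_mulVec]
    _ = P *ᵥ (conj P M *ᵥ e) := by
        rw [Matrix.mulVec_mulVec, conj, h2]
    _ = P *ᵥ (c • e) := by rw [h]
    _ = c • (P *ᵥ e) := Matrix.mulVec_smul P c e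

lemma mulVec_ne_zero {P : M2 K} (hP : P.det ≠ 0) {e : Fin 2 → K}
    (he : e ≠ 0) : P *ᵥ e ≠ 0 := by
  intro h
  exact he (Matrix.eq_zero_of_mulVec_eq_zero hP h)

lemma conj_eq_of {P : M2 K} (hP : P.det ≠ 0) {A T : M2 K}
    (h : A * P = P * T) : conj P A = T := by
  have h1 : P⁻¹ * P = 1 := Matrix.nonsing_inv_mul P (isUnit_iff_ne_zero.mpr hP)
  rw [conj, Matrix.mul_assoc, h, ← Matrix.mul_assoc, h1, Matrix.one_mul]

end ConjMachinery

lemma upper_eig {M : M2 K} (h : M 1 0 = 0) :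
    M *ᵥ ![1, 0] = M 0 0 • ![1, 0] := by
  funext i
  fin_cases i <;>
    simp [Matrix.mulVec, dotProduct, Fin.sum_univ_two, h]

lemma lower_eig {M : M2 K} (h : M 0 1 = 0) :
    M *ᵥ ![0, 1] = M 1 1 • ![0, 1] := by
  funext i
  fin_cases i <;>
    simp [Matrix.mulVec, dotProduct, Fin.sum_univ_two, h]

/-- Key computation in the diagonal case. -/
lemma dform_diag (a d : K) (had : a * d = 1) (B : M2 K) (hB : B.det = 1) :
    dform !![a, 0; 0, d] B = -((a - d) ^ 2) * (B 0 1 * B 1 0) := by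
  have hB' : B 0 0 * B 1 1 - B 0 1 * B 1 0 = 1 := by
    rw [← Matrix.det_fin_two]; exact hB
  unfold dform
  rw [Matrix.trace_fin_two, Matrix.trace_fin_two, Matrix.trace_fin_two]
  simp only [Matrix.mul_apply, Fin.sum_univ_two, Matrix.cons_val',
    Matrix.cons_val_zero, Matrix.cons_val_one, Matrix.head_cons,
    Matrix.empty_val', Matrix.cons_val_fin_one, Matrix.head_fin_const,
    Matrix.of_apply]
  linear_combination (2 * a * d - a ^ 2 - d ^ 2) * hB' +
    (4 - 2 * (B 0 0) * (B 1 1) - (B 0 0) ^ 2 - (B 1 1) ^ 2) * had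

/-- Key computation in the parabolic case. -/
lemma dform_para (e : K) (he : e * e = 1) (B : M2 K) :
    dform !![e, e; 0, e] B = B 1 0 ^ 2 := by
  unfold dform
  rw [Matrix.trace_fin_two, Matrix.trace_fin_two, Matrix.trace_fin_two]
  simp only [Matrix.mul_apply, Fin.sum_univ_two, Matrix.cons_val',
    Matrix.cons_val_zero, Matrix.cons_val_one, Matrix.head_cons,
    Matrix.empty_val', Matrix.cons_val_fin_one, Matrix.head_fin_const,
    Matrix.of_apply]
  linear_combination (4 + (B 0 0 + B 1 0 + B 1 1) ^ 2 -
    2 * (B 0 0 + B 1 1) * (B 0 0 + B 1 0 + B 1 1)) * he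

lemma e0_ne_zero : (![1, 0] : Fin 2 → K) ≠ 0 := by
  intro h
  have := congrFun h 0
  simp at this

lemma e1_ne_zero : (![0, 1] : Fin 2 → K) ≠ 0 := by
  intro h
  have := congrFun h 1
  simp at this

/-- Diagonalization of a regular semisimple element of `SL(2,K)`. -/
lemma diagonalize (A : SL2 K) {a : K} {v : Fin 2 → K} (hv : v ≠ 0)
    (hAv : (A : M2 K) *ᵥ v = a • v) (hq : a ^ 2 - trM A * a + 1 = 0)
    (ha2 : a * a ≠ 1) :
    ∃ P : M2 K, P.det ≠ 0 ∧ conj P (A : M2 K) = !![a, 0; 0, a⁻¹] := by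
  have ha : a ≠ 0 := eig_ne_zero hq
  have had : a * a⁻¹ = 1 := mul_inv_cancel₀ ha
  have hdet : ((A : M2 K) - a⁻¹ • 1).det = 0 := by
    have hA1 : (A : M2 K).det = 1 := A.prop
    have ht : trM A = (A : M2 K) 0 0 + (A : M2 K) 1 1 := Matrix.trace_fin_two _
    rw [ht] at hq
    rw [Matrix.det_fin_two] at hA1
    rw [Matrix.det_fin_two]
    simp only [Matrix.sub_apply, Matrix.smul_apply, Matrix.one_apply_eq,
      Matrix.one_apply_ne, smul_eq_mul, mul_one, mul_zero, sub_zero,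
      Fin.zero_eq_one_iff, Fin.one_eq_zero_iff, ne_eq, OfNat.ofNat_ne_one,
      not_false_eq_true]
    linear_combination hA1 + a⁻¹ ^ 2 * hq +
      (a⁻¹ * ((A : M2 K) 0 0 + (A : M2 K) 1 1) - a⁻¹ * a - 1) * had
  obtain ⟨w, hw, hw0⟩ := Matrix.exists_mulVec_eq_zero_iff.mpr hdet
  have hAw : (A : M2 K) *ᵥ w = a⁻¹ • w := by
    rw [Matrix.sub_mulVec, Matrix.smul_mulVec, Matrix.one_mulVec,
      sub_eq_zero] at hw0
    exact hw0
  have hanx : a - a⁻¹ ≠ 0 := by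
    intro h
    apply ha2
    rw [sub_eq_zero] at h
    have := had
    rw [← h] at this
    exact this
  have hcr : cross v w ≠ 0 := by
    intro hc
    have hc' : cross w v = 0 := by
      unfold cross at hc ⊢
      linear_combination -hc
    obtain ⟨c, hwc⟩ := exists_smul_of_cross_eq_zero hv hc'
    have h1 : (A : M2 K) *ᵥ w = (c * a) • v := by
      rw [hwc, Matrix.mulVec_smul, hAv, smul_smul]
    have h2 : (A : M2 K) *ᵥ w = (a⁻¹ * c) • v := by
      rw [hAw, hwc, smul_smul]
    have h3 : (c * a - a⁻¹ * c) • v = 0 := by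
      rw [sub_smul, ← h1, ← h2, sub_self]
    have h4 := eq_zero_of_smul_eq_zero hv h3
    have hc0 : c = 0 := by
      have hfac : c * (a - a⁻¹) = 0 := by linear_combination h4
      exact (mul_eq_zero.mp hfac).resolve_right hanx
    apply hw
    rw [hwc, hc0, zero_smul]
  have hPdet : (col2 v w).det ≠ 0 := by rw [det_col2]; exact hcr
  refine ⟨col2 v w, hPdet, ?_⟩
  apply conj_eq_of hPdet
  rw [mul_col2, hAv, hAw, col2_mul]
  simp only [zero_smul, add_zero, zero_add]

/-- Triangularization of a parabolic (non-central) element of `SL(2,K)`. -/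
lemma parabolize (A : SL2 K) {a : K} (hq : a ^ 2 - trM A * a + 1 = 0)
    (ha2 : a * a = 1) (hns : (A : M2 K) ≠ a • 1) :
    ∃ P : M2 K, P.det ≠ 0 ∧ conj P (A : M2 K) = !![a, a; 0, a] := by
  have ha : a ≠ 0 := eig_ne_zero hq
  set N : M2 K := (A : M2 K) - a • 1 with hN
  have hta : trM A * a = 2 := by linear_combination -hq + ha2
  have ht2 : (A : M2 K) 0 0 + (A : M2 K) 1 1 = 2 * a := by
    have ht : trM A = (A : M2 K) 0 0 + (A : M2 K) 1 1 := Matrix.trace_fin_two _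
    rw [← ht]
    linear_combination a * hta - trM A * ha2
  have hN2 : N * N = 0 := by
    have hA1 : (A : M2 K).det = 1 := A.prop
    rw [Matrix.det_fin_two] at hA1
    rw [hN]
    ext i j
    fin_cases i <;> fin_cases j <;>
      simp [Matrix.mul_apply, Fin.sum_univ_two, Matrix.one_apply]
    · linear_combination -hA1 + (A : M2 K) 0 0 * ht2 + ha2
    · linear_combination (A : M2 K) 0 1 * ht2
    · linear_combination (A : M2 K) 1 0 * ht2
    · linear_combination -hA1 + (A : M2 K) 1 1 * ht2 + ha2
  have hex : ∃ w, N *ᵥ w ≠ 0 := by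
    by_contra hno
    push_neg at hno
    apply hns
    have hN0 : N = 0 := by
      ext i j
      have h := congrFun (hno (Pi.single j 1)) i
      simpa using h
    rw [hN] at hN0
    rwa [sub_eq_zero] at hN0
  obtain ⟨w, hw⟩ := hex
  have hNu : N *ᵥ (N *ᵥ w) = 0 := by
    rw [Matrix.mulVec_mulVec, hN2, Matrix.zero_mulVec]
  have hvne : a • (N *ᵥ w) ≠ 0 := smul_vec_ne_zero ha hw
  have hNv : N *ᵥ (a • (N *ᵥ w)) = 0 := by
    rw [Matrix.mulVec_smul, hNu, smul_zero]
  have hAv : (A : M2 K) *ᵥ (a • (N *ᵥ w)) = a • (a • (N *ᵥ w)) := by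
    have h' := hNv
    rw [hN, Matrix.sub_mulVec, Matrix.smul_mulVec, Matrix.one_mulVec,
      sub_eq_zero] at h'
    exact h'
  have hAw : (A : M2 K) *ᵥ w = a • (a • (N *ᵥ w)) + a • w := by
    have h1 : N *ᵥ w = (A : M2 K) *ᵥ w - a • w := by
      rw [hN, Matrix.sub_mulVec, Matrix.smul_mulVec, Matrix.one_mulVec]
    have h2 : a • (a • (N *ᵥ w)) = N *ᵥ w := by
      rw [smul_smul, ha2, one_smul]
    rw [h2, h1]
    abel
  have hcr : cross (a • (N *ᵥ w)) w ≠ 0 := by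
    intro hc
    have hc' : cross w (a • (N *ᵥ w)) = 0 := by
      unfold cross at hc ⊢
      linear_combination -hc
    obtain ⟨c, hwc⟩ := exists_smul_of_cross_eq_zero hvne hc'
    apply hw
    have hz : N *ᵥ w = c • (N *ᵥ (a • (N *ᵥ w))) := by
      rw [← Matrix.mulVec_smul, ← hwc]
    rw [hNv, smul_zero] at hz
    exact hz
  have hPdet : (col2 (a • (N *ᵥ w)) w).det ≠ 0 := by rw [det_col2]; exact hcr
  refine ⟨col2 (a • (N *ᵥ w)) w, hPdet, ?_⟩
  apply conj_eq_of hPdet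
  rw [mul_col2, hAv, hAw, col2_mul]
  simp only [zero_smul, add_zero]

/-- Two elements with vanishing `Δ` share an eigenvector. -/
lemma two_common (hK : QuadClosed K) (A B : SL2 K) (hD : Delta A B = 0) :
    ∃ v : Fin 2 → K, v ≠ 0 ∧ (∃ c : K, (A : M2 K) *ᵥ v = c • v) ∧
      (∃ c : K, (B : M2 K) *ᵥ v = c • v) := by
  obtain ⟨a, v, hv, hAv, hq⟩ := exists_eig hK A
  have ha : a ≠ 0 := eig_ne_zero hq
  by_cases ha2 : a * a = 1
  · by_cases hsc : (A : M2 K) = a • 1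
    · obtain ⟨b, w, hw, hBw, hqb⟩ := exists_eig hK B
      exact ⟨w, hw,
        ⟨a, by rw [hsc, Matrix.smul_mulVec, Matrix.one_mulVec]⟩, ⟨b, hBw⟩⟩
    · obtain ⟨P, hP, hconj⟩ := parabolize A hq ha2 hsc
      have hA10 : conj P (A : M2 K) 1 0 = 0 := by rw [hconj]; simp
      have hB10 : conj P (B : M2 K) 1 0 = 0 := by
        have hd : dform (conj P (A : M2 K)) (conj P (B : M2 K)) = 0 := by
          rw [dform_conj hP, ← delta_eq_dform]
          exact hD
        rw [hconj, dform_para a ha2] at hd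
        exact (pow_eq_zero_iff (by norm_num : (2 : ℕ) ≠ 0)).mp hd
      exact ⟨P *ᵥ ![1, 0], mulVec_ne_zero hP e0_ne_zero,
        ⟨_, eig_of_conj_eig hP (upper_eig hA10)⟩,
        ⟨_, eig_of_conj_eig hP (upper_eig hB10)⟩⟩
  · obtain ⟨P, hP, hconj⟩ := diagonalize A hv hAv hq ha2
    have had : a * a⁻¹ = 1 := mul_inv_cancel₀ ha
    have hanx : a - a⁻¹ ≠ 0 := by
      intro h
      apply ha2
      rw [sub_eq_zero] at h
      have := had
      rw [← h] at this
      exact this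
    have hne2 : -((a - a⁻¹) ^ 2) ≠ 0 := neg_ne_zero.mpr (pow_ne_zero 2 hanx)
    have hdetB : (conj P (B : M2 K)).det = 1 := by
      rw [det_conj hP]
      exact B.prop
    have hd : dform (conj P (A : M2 K)) (conj P (B : M2 K)) = 0 := by
      rw [dform_conj hP, ← delta_eq_dform]
      exact hD
    rw [hconj, dform_diag a a⁻¹ had _ hdetB] at hd
    have hqr : conj P (B : M2 K) 0 1 * conj P (B : M2 K) 1 0 = 0 :=
      (mul_eq_zero.mp hd).resolve_left hne2
    have hA01 : conj P (A : M2 K) 0 1 = 0 := by rw [hconj]; simp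
    have hA10 : conj P (A : M2 K) 1 0 = 0 := by rw [hconj]; simp
    rcases mul_eq_zero.mp hqr with h | h
    · exact ⟨P *ᵥ ![0, 1], mulVec_ne_zero hP e1_ne_zero,
        ⟨_, eig_of_conj_eig hP (lower_eig hA01)⟩,
        ⟨_, eig_of_conj_eig hP (lower_eig h)⟩⟩
    · exact ⟨P *ᵥ ![1, 0], mulVec_ne_zero hP e0_ne_zero,
        ⟨_, eig_of_conj_eig hP (upper_eig hA10)⟩,
        ⟨_, eig_of_conj_eig hP (upper_eig h)⟩⟩

/-- The key direction: vanishing of the four `Δ`'s yields a common eigenvector. -/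
lemma common_eig_of_delta (hK : QuadClosed K) (A₁ A₂ A₃ : SL2 K)
    (h12 : Delta A₁ A₂ = 0) (h23 : Delta A₂ A₃ = 0) (h31 : Delta A₃ A₁ = 0)
    (h4 : Delta A₁ (A₁ * A₂ * A₃) = 0) :
    ∃ v : Fin 2 → K, v ≠ 0 ∧ (∃ c : K, (A₁ : M2 K) *ᵥ v = c • v) ∧
      (∃ c : K, (A₂ : M2 K) *ᵥ v = c • v) ∧
      (∃ c : K, (A₃ : M2 K) *ᵥ v = c • v) := by
  obtain ⟨a, v, hv, hAv, hq⟩ := exists_eig hK A₁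
  have ha : a ≠ 0 := eig_ne_zero hq
  by_cases ha2 : a * a = 1
  · by_cases hsc : (A₁ : M2 K) = a • 1
    · obtain ⟨w, hw, h2, h3⟩ := two_common hK A₂ A₃ h23
      exact ⟨w, hw,
        ⟨a, by rw [hsc, Matrix.smul_mulVec, Matrix.one_mulVec]⟩, h2, h3⟩
    · obtain ⟨P, hP, hconj⟩ := parabolize A₁ hq ha2 hsc
      have hA10 : conj P (A₁ : M2 K) 1 0 = 0 := by rw [hconj]; simp
      have hB2 : conj P (A₂ : M2 K) 1 0 = 0 := by
        have hd : dform (conj P (A₁ : M2 K)) (conj P (A₂ : M2 K)) = 0 := by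
          rw [dform_conj hP, ← delta_eq_dform]
          exact h12
        rw [hconj, dform_para a ha2] at hd
        exact (pow_eq_zero_iff (by norm_num : (2 : ℕ) ≠ 0)).mp hd
      have hB3 : conj P (A₃ : M2 K) 1 0 = 0 := by
        have hd : dform (conj P (A₁ : M2 K)) (conj P (A₃ : M2 K)) = 0 := by
          rw [dform_conj hP, dform_comm, ← delta_eq_dform]
          exact h31
        rw [hconj, dform_para a ha2] at hd
        exact (pow_eq_zero_iff (by norm_num : (2 : ℕ) ≠ 0)).mp hd
      exact ⟨P *ᵥ ![1, 0], mulVec_ne_zero hP e0_ne_zero,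
        ⟨_, eig_of_conj_eig hP (upper_eig hA10)⟩,
        ⟨_, eig_of_conj_eig hP (upper_eig hB2)⟩,
        ⟨_, eig_of_conj_eig hP (upper_eig hB3)⟩⟩
  · -- `A₁` is regular semisimple.
    obtain ⟨P, hP, hconj⟩ := diagonalize A₁ hv hAv hq ha2
    have had : a * a⁻¹ = 1 := mul_inv_cancel₀ ha
    have hanx : a - a⁻¹ ≠ 0 := by
      intro h
      apply ha2
      rw [sub_eq_zero] at h
      have := had
      rw [← h] at this
      exact this
    have hne2 : -((a - a⁻¹) ^ 2) ≠ 0 := neg_ne_zero.mpr (pow_ne_zero 2 hanx)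
    have hA01 : conj P (A₁ : M2 K) 0 1 = 0 := by rw [hconj]; simp
    have hA10 : conj P (A₁ : M2 K) 1 0 = 0 := by rw [hconj]; simp
    have hdet2 : (conj P (A₂ : M2 K)).det = 1 := by
      rw [det_conj hP]; exact A₂.prop
    have hdet3 : (conj P (A₃ : M2 K)).det = 1 := by
      rw [det_conj hP]; exact A₃.prop
    have h2 : conj P (A₂ : M2 K) 0 1 * conj P (A₂ : M2 K) 1 0 = 0 := by
      have hd : dform (conj P (A₁ : M2 K)) (conj P (A₂ : M2 K)) = 0 := by
        rw [dform_conj hP, ← delta_eq_dform]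
        exact h12
      rw [hconj, dform_diag a a⁻¹ had _ hdet2] at hd
      exact (mul_eq_zero.mp hd).resolve_left hne2
    have h3 : conj P (A₃ : M2 K) 0 1 * conj P (A₃ : M2 K) 1 0 = 0 := by
      have hd : dform (conj P (A₁ : M2 K)) (conj P (A₃ : M2 K)) = 0 := by
        rw [dform_conj hP, dform_comm, ← delta_eq_dform]
        exact h31
      rw [hconj, dform_diag a a⁻¹ had _ hdet3] at hd
      exact (mul_eq_zero.mp hd).resolve_left hne2
    -- the fourth condition, in the diagonalizing basis
    have hdetD : (!![a, 0; 0, a⁻¹] : M2 K).det = 1 := by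
      rw [Matrix.det_fin_two]
      simp [had]
    have hdetM : ((!![a, 0; 0, a⁻¹] : M2 K) * conj P (A₂ : M2 K) *
        conj P (A₃ : M2 K)).det = 1 := by
      rw [Matrix.det_mul, Matrix.det_mul, hdetD, hdet2, hdet3]
      ring
    have hM : ((!![a, 0; 0, a⁻¹] : M2 K) * conj P (A₂ : M2 K) *
          conj P (A₃ : M2 K)) 0 1 *
        ((!![a, 0; 0, a⁻¹] : M2 K) * conj P (A₂ : M2 K) *
          conj P (A₃ : M2 K)) 1 0 = 0 := by
      have hd : dform (conj P (A₁ : M2 K))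
          (conj P ((A₁ * A₂ * A₃ : SL2 K) : M2 K)) = 0 := by
        rw [dform_conj hP, ← delta_eq_dform]
        exact h4
      have hcoe : ((A₁ * A₂ * A₃ : SL2 K) : M2 K) =
          (A₁ : M2 K) * (A₂ : M2 K) * (A₃ : M2 K) := by
        rw [Matrix.SpecialLinearGroup.coe_mul, Matrix.SpecialLinearGroup.coe_mul]
      rw [hcoe, conj_mul hP, conj_mul hP, hconj,
        dform_diag a a⁻¹ had _ hdetM] at hd
      exact (mul_eq_zero.mp hd).resolve_left hne2
    have e01 : ((!![a, 0; 0, a⁻¹] : M2 K) * conj P (A₂ : M2 K) *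
        conj P (A₃ : M2 K)) 0 1 =
        a * (conj P (A₂ : M2 K) 0 0 * conj P (A₃ : M2 K) 0 1 +
          conj P (A₂ : M2 K) 0 1 * conj P (A₃ : M2 K) 1 1) := by
      simp only [Matrix.mul_apply, Fin.sum_univ_two, Matrix.cons_val',
        Matrix.cons_val_zero, Matrix.cons_val_one, Matrix.head_cons,
        Matrix.empty_val', Matrix.cons_val_fin_one, Matrix.head_fin_const,
        Matrix.of_apply]
      ring
    have e10 : ((!![a, 0; 0, a⁻¹] : M2 K) * conj P (A₂ : M2 K) *
        conj P (A₃ : M2 K)) 1 0 =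
        a⁻¹ * (conj P (A₂ : M2 K) 1 0 * conj P (A₃ : M2 K) 0 0 +
          conj P (A₂ : M2 K) 1 1 * conj P (A₃ : M2 K) 1 0) := by
      simp only [Matrix.mul_apply, Fin.sum_univ_two, Matrix.cons_val',
        Matrix.cons_val_zero, Matrix.cons_val_one, Matrix.head_cons,
        Matrix.empty_val', Matrix.cons_val_fin_one, Matrix.head_fin_const,
        Matrix.of_apply]
      ring
    rw [e01, e10] at hM
    rcases mul_eq_zero.mp h2 with hq2 | hr2
    · rcases mul_eq_zero.mp h3 with hq3 | hr3
      · -- both `0 1` entries vanish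
        exact ⟨P *ᵥ ![0, 1], mulVec_ne_zero hP e1_ne_zero,
          ⟨_, eig_of_conj_eig hP (lower_eig hA01)⟩,
          ⟨_, eig_of_conj_eig hP (lower_eig hq2)⟩,
          ⟨_, eig_of_conj_eig hP (lower_eig hq3)⟩⟩
      · -- mixed case : `B₂ 0 1 = 0`, `B₃ 1 0 = 0`
        have hB200 : conj P (A₂ : M2 K) 0 0 ≠ 0 := by
          intro h0
          rw [Matrix.det_fin_two, h0, hq2] at hdet2
          simp at hdet2
        have hB300 : conj P (A₃ : M2 K) 0 0 ≠ 0 := by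
          intro h0
          rw [Matrix.det_fin_two, h0, hr3] at hdet3
          simp at hdet3
        rw [hq2, hr3] at hM
        have hfac : (a * a⁻¹) * (conj P (A₂ : M2 K) 0 0 * conj P (A₃ : M2 K) 0 0) *
            (conj P (A₃ : M2 K) 0 1 * conj P (A₂ : M2 K) 1 0) = 0 := by
          linear_combination hM
        rw [had, one_mul] at hfac
        rcases mul_eq_zero.mp hfac with h | h
        · exact absurd h (mul_ne_zero hB200 hB300)
        · rcases mul_eq_zero.mp h with h' | h'
          · exact ⟨P *ᵥ ![0, 1], mulVec_ne_zero hP e1_ne_zero,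
              ⟨_, eig_of_conj_eig hP (lower_eig hA01)⟩,
              ⟨_, eig_of_conj_eig hP (lower_eig hq2)⟩,
              ⟨_, eig_of_conj_eig hP (lower_eig h')⟩⟩
          · exact ⟨P *ᵥ ![1, 0], mulVec_ne_zero hP e0_ne_zero,
              ⟨_, eig_of_conj_eig hP (upper_eig hA10)⟩,
              ⟨_, eig_of_conj_eig hP (upper_eig h')⟩,
              ⟨_, eig_of_conj_eig hP (upper_eig hr3)⟩⟩
    · rcases mul_eq_zero.mp h3 with hq3 | hr3
      · -- mixed case : `B₂ 1 0 = 0`, `B₃ 0 1 = 0`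
        have hB211 : conj P (A₂ : M2 K) 1 1 ≠ 0 := by
          intro h0
          rw [Matrix.det_fin_two, h0, hr2] at hdet2
          simp at hdet2
        have hB311 : conj P (A₃ : M2 K) 1 1 ≠ 0 := by
          intro h0
          rw [Matrix.det_fin_two, h0, hq3] at hdet3
          simp at hdet3
        rw [hr2, hq3] at hM
        have hfac : (a * a⁻¹) * (conj P (A₂ : M2 K) 1 1 * conj P (A₃ : M2 K) 1 1) *
            (conj P (A₂ : M2 K) 0 1 * conj P (A₃ : M2 K) 1 0) = 0 := by
          linear_combination hM
        rw [had, one_mul] at hfac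
        rcases mul_eq_zero.mp hfac with h | h
        · exact absurd h (mul_ne_zero hB211 hB311)
        · rcases mul_eq_zero.mp h with h' | h'
          · exact ⟨P *ᵥ ![0, 1], mulVec_ne_zero hP e1_ne_zero,
              ⟨_, eig_of_conj_eig hP (lower_eig hA01)⟩,
              ⟨_, eig_of_conj_eig hP (lower_eig h')⟩,
              ⟨_, eig_of_conj_eig hP (lower_eig hq3)⟩⟩
          · exact ⟨P *ᵥ ![1, 0], mulVec_ne_zero hP e0_ne_zero,
              ⟨_, eig_of_conj_eig hP (upper_eig hA10)⟩,
              ⟨_, eig_of_conj_eig hP (upper_eig hr2)⟩,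
              ⟨_, eig_of_conj_eig hP (upper_eig h')⟩⟩
      · -- both `1 0` entries vanish
        exact ⟨P *ᵥ ![1, 0], mulVec_ne_zero hP e0_ne_zero,
          ⟨_, eig_of_conj_eig hP (upper_eig hA10)⟩,
          ⟨_, eig_of_conj_eig hP (upper_eig hr2)⟩,
          ⟨_, eig_of_conj_eig hP (upper_eig hr3)⟩⟩

/-- A common eigenvector of the generators is an eigenvector of the whole closure. -/
lemma closure_eig {A₁ A₂ A₃ : SL2 K} {v : Fin 2 → K} (hv : v ≠ 0)
    (h1 : ∃ c : K, (A₁ : M2 K) *ᵥ v = c • v)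
    (h2 : ∃ c : K, (A₂ : M2 K) *ᵥ v = c • v)
    (h3 : ∃ c : K, (A₃ : M2 K) *ᵥ v = c • v) :
    ∀ A ∈ Subgroup.closure ({A₁, A₂, A₃} : Set (SL2 K)),
      ∃ c : K, (A : M2 K) *ᵥ v = c • v := by
  intro A hA
  refine Subgroup.closure_induction
    (p := fun (g : SL2 K) _ => ∃ c : K, ((g : M2 K)) *ᵥ v = c • v) ?_ ?_ ?_ ?_ hA
  · rintro x hx
    simp only [Set.mem_insert_iff, Set.mem_singleton_iff] at hx
    rcases hx with rfl | rfl | rfl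
    exacts [h1, h2, h3]
  · exact ⟨1, by simp [Matrix.SpecialLinearGroup.coe_one, Matrix.one_mulVec]⟩
  · rintro x y hx hy ⟨c, hc⟩ ⟨d, hd⟩
    refine ⟨c * d, ?_⟩
    rw [Matrix.SpecialLinearGroup.coe_mul, ← Matrix.mulVec_mulVec, hd,
      Matrix.mulVec_smul, hc, smul_smul, mul_comm]
  · rintro x hx ⟨c, hc⟩
    have hc0 : c ≠ 0 := by
      intro h0
      rw [h0, zero_smul] at hc
      have hx0 := Matrix.eq_zero_of_mulVec_eq_zero
        (ne_of_eq_of_ne x.prop one_ne_zero) hc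
      exact hv hx0
    refine ⟨c⁻¹, ?_⟩
    have h1x : ((x⁻¹ : SL2 K) : M2 K) * (x : M2 K) = 1 := by
      rw [← Matrix.SpecialLinearGroup.coe_mul, inv_mul_cancel,
        Matrix.SpecialLinearGroup.coe_one]
    have hfix : ((x⁻¹ : SL2 K) : M2 K) *ᵥ ((x : M2 K) *ᵥ v) = v := by
      rw [Matrix.mulVec_mulVec, h1x, Matrix.one_mulVec]
    rw [hc, Matrix.mulVec_smul] at hfix
    nth_rewrite 2 [← hfix]
    rw [smul_smul, inv_mul_cancel₀ hc0, one_smul]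

end SL2Red

open Matrix SL2Red in
theorem three_generator_reducible_iff_delta_vanishes
    {K : Type*} [Field K] (hK : QuadClosed K) (A₁ A₂ A₃ : SL2 K) :
    IsReducibleSubgroup (Subgroup.closure ({A₁, A₂, A₃} : Set (SL2 K))) ↔
      (Delta A₁ A₂ = 0 ∧ Delta A₂ A₃ = 0 ∧ Delta A₃ A₁ = 0 ∧
        Delta A₁ (A₁ * A₂ * A₃) = 0) := by
  constructor
  · rintro ⟨v, hv, hall⟩
    have m1 : A₁ ∈ Subgroup.closure ({A₁, A₂, A₃} : Set (SL2 K)) :=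
      Subgroup.subset_closure (by simp)
    have m2 : A₂ ∈ Subgroup.closure ({A₁, A₂, A₃} : Set (SL2 K)) :=
      Subgroup.subset_closure (by simp)
    have m3 : A₃ ∈ Subgroup.closure ({A₁, A₂, A₃} : Set (SL2 K)) :=
      Subgroup.subset_closure (by simp)
    obtain ⟨c₁, h1⟩ := hall A₁ m1
    obtain ⟨c₂, h2⟩ := hall A₂ m2
    obtain ⟨c₃, h3⟩ := hall A₃ m3
    have h123 : ((A₁ * A₂ * A₃ : SL2 K) : M2 K) *ᵥ v = (c₃ * c₂ * c₁) • v := by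
      rw [Matrix.SpecialLinearGroup.coe_mul, Matrix.SpecialLinearGroup.coe_mul,
        ← Matrix.mulVec_mulVec, h3, Matrix.mulVec_smul, ← Matrix.mulVec_mulVec,
        h2, Matrix.mulVec_smul, h1, smul_smul, smul_smul, mul_assoc]
    exact ⟨delta_eq_zero_of_common_eig hv h1 h2,
      delta_eq_zero_of_common_eig hv h2 h3,
      delta_eq_zero_of_common_eig hv h3 h1,
      delta_eq_zero_of_common_eig hv h1 h123⟩
  · rintro ⟨h12, h23, h31, h4⟩
    obtain ⟨v, hv, h1, h2, h3⟩ := common_eig_of_delta hK A₁ A₂ A₃ h12 h23 h31 h4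
    exact ⟨v, hv, closure_eig hv h1 h2 h3⟩
end

section
/- Let K be a quadratically closed field and A₁, …, Aₙ ∈ SL(2,K). The subgroup of SL(2,K) generated by A₁, …, Aₙ is reducible if and only if for all indices i, j, k ∈ {1, …, n}, the subgroup generated by A_i, A_j, A_k is reducible (equivalently, for all possible choices of indices i, j, k, one has Δ(A_i,A_j) = 0 and Δ(A_i, A_iA_jA_k) = 0). -/
/-!
`SL(2,K)` acts on the projective line `ℙ¹(K)`, and a subgroup is reducible exactly when it has a
common fixed point there. An element fixing three distinct points is scalar, so an element acting
nontrivially fixes at most two points. This alone forces a common fixed point for a family in which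
any three members share one, and for `A, B, C` as soon as the pairs `(A, B)`, `(A, C)`, `(B, C)`
and `(A, ABC)` each share one. Over a quadratically closed field, `A` and `B` share a fixed point
iff `Δ(A, B) = 0`: in a basis `(v, Bv)` with `v` an eigenvector of `A`, `Δ(A, B)` becomes a binary
quadratic form that splits.
-/

open Projectivization
open scoped LinearAlgebra.Projectivization

section FixedPoints

def AtMostTwoFixedPoints (G X : Type*) [SMul G X] : Prop :=
  ∀ g : G, (∃ x : X, g • x ≠ x) →
    ∀ x y z : X, x ≠ y → g • x = x → g • y = y → g • z = z → z = x ∨ z = y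

variable {G X : Type*}

theorem exists_forall_smul_eq_self_of_triples [SMul G X] [Nonempty X]
    (hG : AtMostTwoFixedPoints G X) {ι : Type*} (A : ι → G)
    (h : ∀ i j k, ∃ x : X, A i • x = x ∧ A j • x = x ∧ A k • x = x) :
    ∃ x : X, ∀ i, A i • x = x := by
  by_cases htriv : ∀ i (x : X), A i • x = x
  · exact ⟨Classical.arbitrary X, fun i => htriv i _⟩
  push Not at htriv
  obtain ⟨i, hmove⟩ := htriv
  obtain ⟨x₁, hix₁, -, -⟩ := h i i i
  by_cases hall : ∀ j, A j • x₁ = x₁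
  · exact ⟨x₁, hall⟩
  push Not at hall
  obtain ⟨j, hjx₁⟩ := hall
  obtain ⟨x₂, hix₂, hjx₂, -⟩ := h i j j
  have hne : x₁ ≠ x₂ := by rintro rfl; exact hjx₁ hjx₂
  refine ⟨x₂, fun k => ?_⟩
  obtain ⟨z, hiz, hjz, hkz⟩ := h i j k
  rcases hG _ hmove x₁ x₂ z hne hix₁ hix₂ hiz with rfl | rfl
  · exact absurd hjz hjx₁
  · exact hkz

theorem exists_smul_eq_self_of_pairs [Group G] [MulAction G X] (hG : AtMostTwoFixedPoints G X)
    {A B C : G} (hAB : ∃ x : X, A • x = x ∧ B • x = x) (hAC : ∃ x : X, A • x = x ∧ C • x = x)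
    (hBC : ∃ x : X, B • x = x ∧ C • x = x) (hABC : ∃ x : X, A • x = x ∧ (A * B * C) • x = x) :
    ∃ x : X, A • x = x ∧ B • x = x ∧ C • x = x := by
  by_cases htriv : ∀ x : X, A • x = x
  · obtain ⟨x, hB, hC⟩ := hBC
    exact ⟨x, htriv x, hB, hC⟩
  push Not at htriv
  obtain ⟨x₁, hA₁, hB₁⟩ := hAB
  obtain ⟨x₂, hA₂, hC₂⟩ := hAC
  by_cases hne : x₁ = x₂
  · subst hne
    exact ⟨x₁, hA₁, hB₁, hC₂⟩
  obtain ⟨z, hAz, hABCz⟩ := hABC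
  rcases hG A htriv x₁ x₂ z hne hA₁ hA₂ hAz with rfl | rfl
  · have hC : C ∈ MulAction.stabilizer G z := by
      rw [show C = (A * B)⁻¹ * (A * B * C) by group]
      exact mul_mem (inv_mem (mul_mem hA₁ hB₁)) hABCz
    exact ⟨z, hAz, hB₁, hC⟩
  · have hB : B ∈ MulAction.stabilizer G z := by
      rw [show B = A⁻¹ * (A * B * C) * C⁻¹ by group]
      exact mul_mem (mul_mem (inv_mem hA₂) hABCz) (inv_mem hC₂)
    exact ⟨z, hAz, hB, hC₂⟩

end FixedPoints

namespace SL2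

variable {K : Type*} [Field K]

def wedge (v w : Fin 2 → K) : K := v 0 * w 1 - v 1 * w 0

lemma wedge_smul_eq (v w u : Fin 2 → K) : wedge v w • u = wedge u w • v + wedge v u • w := by
  ext i
  fin_cases i <;>
    simp only [wedge, Fin.zero_eta, Fin.mk_one, Fin.isValue, Pi.add_apply, Pi.smul_apply,
      smul_eq_mul] <;> ring

lemma exists_eq_smul_add_smul {v w : Fin 2 → K} (hc : wedge v w ≠ 0) (u : Fin 2 → K) :
    ∃ x y : K, u = x • v + y • w :=
  ⟨(wedge v w)⁻¹ * wedge u w, (wedge v w)⁻¹ * wedge v u, by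
    nth_rw 1 [← inv_smul_smul₀ hc u]; rw [wedge_smul_eq, smul_add, smul_smul, smul_smul]⟩

lemma eq_zero_of_smul_add_smul_eq_zero {v w : Fin 2 → K} {x y : K} (hc : wedge v w ≠ 0)
    (h : x • v + y • w = 0) : x = 0 ∧ y = 0 := by
  have h0 := congrFun h 0
  have h1 := congrFun h 1
  simp only [Pi.add_apply, Pi.smul_apply, smul_eq_mul, Pi.zero_apply] at h0 h1
  constructor
  · exact (mul_eq_zero.1 (by unfold wedge; linear_combination w 1 * h0 - w 0 * h1)).resolve_right hc
  · exact (mul_eq_zero.1 (by unfold wedge; linear_combination v 0 * h1 - v 1 * h0)).resolve_right hc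

lemma mk_eq_mk_of_wedge_eq_zero {v w : Fin 2 → K} (hv : v ≠ 0) (hw : w ≠ 0) (h : wedge v w = 0) :
    mk K v hv = mk K w hw := by
  obtain ⟨i, hi⟩ := Function.ne_iff.1 hw
  have hvw : w i • v = v i • w := by
    unfold wedge at h
    ext j
    fin_cases i <;> fin_cases j <;> simp only [Pi.smul_apply, smul_eq_mul] <;> grind
  refine (mk_eq_mk_iff' K v w hv hw).2 ⟨v i / w i, ?_⟩
  rw [div_eq_inv_mul, mul_smul, ← hvw, inv_smul_smul₀ hi]

lemma smul_apply (M : SL2 K) (v : Fin 2 → K) (i : Fin 2) :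
    (M • v) i = M i 0 * v 0 + M i 1 * v 1 := by
  simp [Matrix.SpecialLinearGroup.smul_def, Matrix.mulVec, dotProduct, Fin.sum_univ_two]

lemma trM_eq (M : SL2 K) : trM M = M 0 0 + M 1 1 := Matrix.trace_fin_two _

lemma det_eq_one (M : SL2 K) : M 0 0 * M 1 1 - M 0 1 * M 1 0 = 1 := by
  rw [← Matrix.det_fin_two]; exact M.2

lemma wedge_smul_smul (M : SL2 K) (v w : Fin 2 → K) : wedge (M • v) (M • w) = wedge v w := by
  simp only [wedge, smul_apply]
  linear_combination (v 0 * w 1 - v 1 * w 0) * det_eq_one M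

lemma trM_mul_wedge (M : SL2 K) (v w : Fin 2 → K) :
    trM M * wedge v w = wedge (M • v) w + wedge v (M • w) := by
  simp only [wedge, smul_apply, trM_eq]; ring

lemma trM_eq_and_det_of_basis {M : SL2 K} {v w : Fin 2 → K} {p q r s : K} (hc : wedge v w ≠ 0)
    (hv : M • v = p • v + q • w) (hw : M • w = r • v + s • w) :
    trM M = p + s ∧ p * s - q * r = 1 := by
  constructor
  · apply mul_right_cancel₀ hc
    rw [trM_mul_wedge, hv, hw]
    simp only [wedge, Pi.add_apply, Pi.smul_apply, smul_eq_mul]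
    ring
  · apply mul_right_cancel₀ hc
    have := wedge_smul_smul M v w
    rw [hv, hw] at this
    simp only [wedge, Pi.add_apply, Pi.smul_apply, smul_eq_mul] at this ⊢
    linear_combination this

-- Cayley–Hamilton, applied to `v`.
lemma smul_smul_self (M : SL2 K) (v : Fin 2 → K) : M • M • v = trM M • M • v - v := by
  ext i
  fin_cases i <;> simp only [Fin.zero_eta, Fin.mk_one, Fin.isValue, smul_apply, trM_eq,
    Pi.sub_apply, Pi.smul_apply, smul_eq_mul]
  · linear_combination -(v 0) * det_eq_one M
  · linear_combination -(v 1) * det_eq_one M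

lemma smul_mk_eq_self_iff {M : SL2 K} {v : Fin 2 → K} (hv : v ≠ 0) :
    M • mk K v hv = mk K v hv ↔ ∃ c : K, M • v = c • v := by
  rw [smul_mk, mk_eq_mk_iff']
  exact exists_congr fun c => eq_comm

theorem isReducibleSubgroup_closure_iff (S : Set (SL2 K)) :
    IsReducibleSubgroup (Subgroup.closure S) ↔ ∃ p : ℙ K (Fin 2 → K), ∀ M ∈ S, M • p = p := by
  constructor
  · rintro ⟨v, hv, h⟩
    exact ⟨mk K v hv, fun M hM => (smul_mk_eq_self_iff hv).2 (h M (Subgroup.subset_closure hM))⟩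
  · rintro ⟨p, hp⟩
    have hle : Subgroup.closure S ≤ MulAction.stabilizer (SL2 K) p := (Subgroup.closure_le _).2 hp
    refine ⟨p.rep, p.rep_nonzero, fun M hM => (smul_mk_eq_self_iff p.rep_nonzero).1 ?_⟩
    rw [mk_rep]
    exact hle hM

lemma smul_eq_smul_of_three_eigenvectors {M : SL2 K} {v w : Fin 2 → K} {a b c x y : K}
    (hc : wedge v w ≠ 0) (hx : x ≠ 0) (hy : y ≠ 0) (hv : M • v = a • v) (hw : M • w = b • w)
    (hu : M • (x • v + y • w) = c • (x • v + y • w)) (z : Fin 2 → K) : M • z = a • z := by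
  rw [smul_add, smul_comm, smul_comm M y, hv, hw] at hu
  have hzero : (x * (a - c)) • v + (y * (b - c)) • w = 0 := by
    linear_combination (norm := module) hu
  obtain ⟨hac, hbc⟩ := eq_zero_of_smul_add_smul_eq_zero hc hzero
  have hab : b = a := by
    rw [mul_eq_zero, sub_eq_zero] at hac hbc
    rw [hac.resolve_left hx, hbc.resolve_left hy]
  obtain ⟨r, s, rfl⟩ := exists_eq_smul_add_smul hc z
  rw [smul_add, smul_comm, smul_comm M s, hv, hw, hab]
  module

theorem atMostTwoFixedPoints : AtMostTwoFixedPoints (SL2 K) (ℙ K (Fin 2 → K)) := by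
  rintro M ⟨q, hq⟩ p₁ p₂ p₃ hne h₁ h₂ h₃
  by_contra! hp₃
  induction p₁ with | h v hv => ?_
  induction p₂ with | h w hw => ?_
  induction p₃ with | h u hu => ?_
  induction q with | h z hz => ?_
  obtain ⟨a, hav⟩ := (smul_mk_eq_self_iff hv).1 h₁
  obtain ⟨b, hbw⟩ := (smul_mk_eq_self_iff hw).1 h₂
  obtain ⟨c, hcu⟩ := (smul_mk_eq_self_iff hu).1 h₃
  have hc : wedge v w ≠ 0 := fun h0 => hne (mk_eq_mk_of_wedge_eq_zero hv hw h0)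
  obtain ⟨x, y, rfl⟩ := exists_eq_smul_add_smul hc u
  have hx : x ≠ 0 := by
    rintro rfl
    exact hp₃.2 ((mk_eq_mk_iff' K _ w hu hw).2 ⟨y, by rw [zero_smul, zero_add]⟩)
  have hy : y ≠ 0 := by
    rintro rfl
    exact hp₃.1 ((mk_eq_mk_iff' K _ v hu hv).2 ⟨x, by rw [zero_smul, add_zero]⟩)
  exact hq ((smul_mk_eq_self_iff hz).2
    ⟨a, smul_eq_smul_of_three_eigenvectors hc hx hy hav hbw hcu z⟩)

theorem exists_smul_eq_self (hK : QuadClosed K) (M : SL2 K) : ∃ p : ℙ K (Fin 2 → K), M • p = p := by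
  obtain ⟨a, ha⟩ := hK (-trM M) 1
  have hdet : ((M : Matrix (Fin 2) (Fin 2) K) - a • 1).det = 0 := by
    rw [trM_eq] at ha
    simp only [Matrix.det_fin_two, Matrix.sub_apply, Matrix.smul_apply, Matrix.one_apply_eq,
      Matrix.one_apply_ne zero_ne_one, Matrix.one_apply_ne one_ne_zero, smul_eq_mul, mul_one,
      mul_zero, sub_zero]
    linear_combination ha + det_eq_one M
  obtain ⟨v, hv, hker⟩ := Matrix.exists_mulVec_eq_zero_iff.2 hdet
  refine ⟨mk K v hv, (smul_mk_eq_self_iff hv).2 ⟨a, ?_⟩⟩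
  rwa [Matrix.sub_mulVec, Matrix.smul_mulVec, Matrix.one_mulVec, sub_eq_zero] at hker

lemma ne_zero_of_smul_eq_smul {M : SL2 K} {v : Fin 2 → K} {c : K} (hv : v ≠ 0)
    (h : M • v = c • v) : c ≠ 0 := by
  rintro rfl
  rw [zero_smul, smul_eq_zero_iff_eq] at h
  exact hv h

lemma trM_eq_add_inv {M : SL2 K} {v : Fin 2 → K} {c : K} (hv : v ≠ 0) (h : M • v = c • v) :
    trM M = c + c⁻¹ := by
  have hquad : (c ^ 2 - trM M * c + 1) • v = 0 := by
    have := smul_smul_self M v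
    rw [h, smul_comm, h] at this
    linear_combination (norm := module) this
  have hc := ne_zero_of_smul_eq_smul hv h
  field_simp
  linear_combination -(smul_eq_zero.1 hquad).resolve_right hv

theorem delta_eq_zero_of_smul_eq_self {A B : SL2 K} {p : ℙ K (Fin 2 → K)} (hA : A • p = p)
    (hB : B • p = p) : Delta A B = 0 := by
  induction p with | h v hv => ?_
  obtain ⟨a, ha⟩ := (smul_mk_eq_self_iff hv).1 hA
  obtain ⟨b, hb⟩ := (smul_mk_eq_self_iff hv).1 hB
  have hab : (A * B) • v = (a * b) • v := by rw [mul_smul, hb, smul_comm, ha, smul_smul, mul_comm]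
  have ha0 := ne_zero_of_smul_eq_smul hv ha
  have hb0 := ne_zero_of_smul_eq_smul hv hb
  rw [Delta, trM_eq_add_inv hv ha, trM_eq_add_inv hv hb, trM_eq_add_inv hv hab]
  field_simp
  ring

lemma delta_eq_of_basis {A B : SL2 K} {v w : Fin 2 → K} {a α β : K} (hBv : B • v = w)
    (hc : wedge v w ≠ 0) (hAv : A • v = a • v) (hAw : A • w = α • v + β • w) :
    Delta A B = α ^ 2 + trM B * (β - a) * α + (β - a) ^ 2 := by
  have hBw : B • w = trM B • w - v := hBv ▸ smul_smul_self B v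
  obtain ⟨htA, hdetA⟩ :=
    trM_eq_and_det_of_basis (p := a) (q := 0) hc (by rw [hAv, zero_smul, add_zero]) hAw
  have hABw : (A * B) • w = (trM B * α - a) • v + (trM B * β) • w := by
    rw [mul_smul, hBw, smul_sub, smul_comm, hAw, hAv]
    module
  obtain ⟨htAB, -⟩ := trM_eq_and_det_of_basis hc (by rw [mul_smul, hBv, hAw]) hABw
  rw [Delta, htA, htAB]
  linear_combination (4 - trM B ^ 2) * hdetA

theorem exists_smul_eq_self_of_delta_eq_zero (hK : QuadClosed K) {A B : SL2 K}
    (h : Delta A B = 0) : ∃ p : ℙ K (Fin 2 → K), A • p = p ∧ B • p = p := by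
  obtain ⟨p, hAp⟩ := exists_smul_eq_self hK A
  induction p with | h v hv => ?_
  obtain ⟨a, hAv⟩ := (smul_mk_eq_self_iff hv).1 hAp
  by_cases hc : wedge v (B • v) = 0
  · refine ⟨mk K v hv, hAp, ?_⟩
    rw [smul_mk]
    exact (mk_eq_mk_of_wedge_eq_zero hv _ hc).symm
  generalize hBv : B • v = w at hc
  obtain ⟨α, β, hAw⟩ := exists_eq_smul_add_smul hc (A • w)
  rw [delta_eq_of_basis hBv hc hAv hAw] at h
  obtain ⟨y, hy, hα⟩ : ∃ y : K, y ^ 2 + trM B * y + 1 = 0 ∧ α = y * (β - a) := by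
    obtain ⟨x, hx⟩ := hK (trM B) 1
    have hfac : (α - x * (β - a)) * (α - (-trM B - x) * (β - a)) = 0 := by
      linear_combination h - (β - a) ^ 2 * hx
    rcases mul_eq_zero.1 hfac with hα | hα
    · exact ⟨x, hx, by linear_combination hα⟩
    · exact ⟨-trM B - x, by linear_combination hx, by linear_combination hα⟩
  have hu : y • v + w ≠ 0 := by
    intro h0
    apply hc
    rw [eq_neg_of_add_eq_zero_right h0]
    simp only [wedge, Pi.neg_apply, Pi.smul_apply, smul_eq_mul]
    ring
  refine ⟨mk K _ hu, (smul_mk_eq_self_iff hu).2 ⟨β, ?_⟩, (smul_mk_eq_self_iff hu).2 ⟨y + trM B, ?_⟩⟩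
  · rw [smul_add, smul_comm, hAv, hAw, hα]
    module
  · have hBw : B • w = trM B • w - v := hBv ▸ smul_smul_self B v
    rw [smul_add, smul_comm, hBv, hBw]
    linear_combination (norm := module) -(hy • v)

end SL2

theorem n_generator_reducible_iff_three_generator_reducible
    {K : Type*} [Field K] (hK : QuadClosed K) (n : ℕ) (A : Fin n → SL2 K) :
    (IsReducibleSubgroup (Subgroup.closure (Set.range A)) ↔
        ∀ i j k : Fin n,
          IsReducibleSubgroup (Subgroup.closure ({A i, A j, A k} : Set (SL2 K)))) ∧
      (IsReducibleSubgroup (Subgroup.closure (Set.range A)) ↔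
        ∀ i j k : Fin n,
          Delta (A i) (A j) = 0 ∧ Delta (A i) (A i * A j * A k) = 0) := by
  simp only [SL2.isReducibleSubgroup_closure_iff, Set.forall_mem_range, Set.forall_mem_insert,
    Set.mem_singleton_iff, forall_eq]
  refine ⟨⟨fun ⟨p, hp⟩ i j k => ⟨p, hp i, hp j, hp k⟩,
    exists_forall_smul_eq_self_of_triples SL2.atMostTwoFixedPoints A⟩, ⟨?_, fun h => ?_⟩⟩
  · rintro ⟨p, hp⟩ i j k
    exact ⟨SL2.delta_eq_zero_of_smul_eq_self (hp i) (hp j),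
      SL2.delta_eq_zero_of_smul_eq_self (hp i) (by rw [mul_smul, mul_smul, hp, hp, hp])⟩
  · refine exists_forall_smul_eq_self_of_triples SL2.atMostTwoFixedPoints A fun i j k => ?_
    exact exists_smul_eq_self_of_pairs SL2.atMostTwoFixedPoints
      (SL2.exists_smul_eq_self_of_delta_eq_zero hK (h i j j).1)
      (SL2.exists_smul_eq_self_of_delta_eq_zero hK (h i k k).1)
      (SL2.exists_smul_eq_self_of_delta_eq_zero hK (h j k k).1)
      (SL2.exists_smul_eq_self_of_delta_eq_zero hK (h i j k).2)
end

section
/- Let K be a quadratically closed field. A subgroup G of SL(2,K) is reducible if and only if for every pair of elements A, B ∈ G, the subgroup generated by A and B is reducible. -/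
/-!
Write `Stab v` for the stabilizer in `SL(2,K)` of the line `K ∙ v`. If every element of `G` is
scalar, `G` fixes every line. Otherwise pick a non-scalar `A ∈ G`; applied to the pair `(A, A)` the
hypothesis gives an eigenline `v₁` of `A`. If `G` fixed no line, some `B₁ ∈ G` would move `v₁`,
the pair `(A, B₁)` would give a second eigenline `v₂` of `A`, and some `B₂ ∈ G` would move `v₂`.
A non-scalar `2 × 2` matrix has at most two eigenlines, so every element of `G` sharing an
eigenline with `A` lies in `Stab v₁` or `Stab v₂`. Thus `B₂ ∈ Stab v₁`, and `B₁ B₂` lies in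
`Stab v₁` (forcing `B₁ ∈ Stab v₁`) or in `Stab v₂` (forcing `B₂ ∈ Stab v₂`), a contradiction.
-/

theorem LinearIndependent.eigenvalues_eq_of_smul_add_smul {G V K : Type*} [Monoid G] [Field K]
    [AddCommGroup V] [Module K V] [DistribMulAction G V] [SMulCommClass G K V]
    {g : G} {v₁ v₂ : V} (hli : LinearIndependent K ![v₁, v₂]) {c₁ c₂ c a b : K}
    (h₁ : g • v₁ = c₁ • v₁) (h₂ : g • v₂ = c₂ • v₂)
    (h : g • (a • v₁ + b • v₂) = c • (a • v₁ + b • v₂)) (ha : a ≠ 0) (hb : b ≠ 0) :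
    c₁ = c ∧ c₂ = c := by
  have hzero : (a * (c₁ - c)) • v₁ + (b * (c₂ - c)) • v₂ = 0 := by
    rw [smul_add, smul_comm g a, smul_comm g b, h₁, h₂] at h
    linear_combination (norm := module) h
  obtain ⟨h₁', h₂'⟩ := LinearIndependent.pair_iff.mp hli _ _ hzero
  exact ⟨sub_eq_zero.mp ((mul_eq_zero.mp h₁').resolve_left ha),
    sub_eq_zero.mp ((mul_eq_zero.mp h₂').resolve_left hb)⟩

section LineStabilizer

open Pointwise

variable {n K : Type*} [Fintype n] [DecidableEq n] [Field K]

def lineStabilizer (v : n → K) : Subgroup (Matrix.SpecialLinearGroup n K) :=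
  MulAction.stabilizer _ (K ∙ v)

theorem mem_lineStabilizer_iff {A : Matrix.SpecialLinearGroup n K} {v : n → K} :
    A ∈ lineStabilizer v ↔ ∃ c : K, A • v = c • v := by
  rw [lineStabilizer, MulAction.mem_stabilizer_iff, Submodule.smul_span,
    Set.smul_set_singleton]
  constructor
  · intro h
    obtain ⟨c, hc⟩ := Submodule.mem_span_singleton.mp (h ▸ Submodule.mem_span_singleton_self _)
    exact ⟨c, hc.symm⟩
  · rintro ⟨c, hc⟩
    rcases eq_or_ne c 0 with rfl | hc0
    · rw [zero_smul, smul_eq_zero_iff_eq] at hc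
      simp [hc]
    · rw [hc, Submodule.span_singleton_smul_eq hc0.isUnit]

theorem lineStabilizer_smul {t : K} (ht : t ≠ 0) (v : n → K) :
    lineStabilizer (t • v) = lineStabilizer v := by
  rw [lineStabilizer, lineStabilizer, Submodule.span_singleton_smul_eq ht.isUnit]

theorem linearIndependent_pair_of_lineStabilizer_ne {v₁ v₂ : n → K} (hv₁ : v₁ ≠ 0)
    (hv₂ : v₂ ≠ 0) (h : lineStabilizer v₁ ≠ lineStabilizer v₂) :
    LinearIndependent K ![v₁, v₂] := by
  refine (LinearIndependent.pair_iff' hv₁).mpr fun a ha => h ?_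
  rw [← ha, lineStabilizer_smul (left_ne_zero_of_smul (ha ▸ hv₂))]

end LineStabilizer

section SL2

variable {K : Type*} [Field K]

theorem isReducibleSubgroup_iff {H : Subgroup (SL2 K)} :
    IsReducibleSubgroup H ↔ ∃ v ≠ 0, H ≤ lineStabilizer v := by
  simp only [IsReducibleSubgroup, SetLike.le_def, mem_lineStabilizer_iff]
  rfl

/-- Writing `u = a • v₁ + b • v₂` with `a, b ≠ 0` would force `A` to act on `v₁` and `v₂`,
hence on all of `K²`, by one scalar. -/
theorem lineStabilizer_eq_or_eq_of_mem {A : SL2 K} {w v₁ v₂ u : Fin 2 → K}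
    (hw : A ∉ lineStabilizer w) (hli : LinearIndependent K ![v₁, v₂])
    (h₁ : A ∈ lineStabilizer v₁) (h₂ : A ∈ lineStabilizer v₂) (hu : u ≠ 0)
    (hAu : A ∈ lineStabilizer u) :
    lineStabilizer u = lineStabilizer v₁ ∨ lineStabilizer u = lineStabilizer v₂ := by
  have hspan (x : Fin 2 → K) : ∃ a b : K, a • v₁ + b • v₂ = x := by
    refine Submodule.mem_span_pair.mp ?_
    rw [← Matrix.range_cons_cons_empty v₁ v₂ ![], hli.span_eq_top_of_card_eq_finrank' (by simp)]
    trivial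
  obtain ⟨c₁, h₁⟩ := mem_lineStabilizer_iff.mp h₁
  obtain ⟨c₂, h₂⟩ := mem_lineStabilizer_iff.mp h₂
  obtain ⟨c, hc⟩ := mem_lineStabilizer_iff.mp hAu
  obtain ⟨a, b, rfl⟩ := hspan u
  rcases eq_or_ne a 0 with rfl | ha
  · rw [zero_smul, zero_add] at hu ⊢
    exact .inr (lineStabilizer_smul (left_ne_zero_of_smul hu) v₂)
  rcases eq_or_ne b 0 with rfl | hb
  · rw [zero_smul, add_zero] at hu ⊢
    exact .inl (lineStabilizer_smul (left_ne_zero_of_smul hu) v₁)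
  obtain ⟨hc₁, hc₂⟩ := hli.eigenvalues_eq_of_smul_add_smul h₁ h₂ hc ha hb
  obtain ⟨x, y, rfl⟩ := hspan w
  refine absurd (mem_lineStabilizer_iff.mpr ⟨c, ?_⟩) hw
  rw [smul_add, smul_comm A x, smul_comm A y, h₁, h₂, hc₁, hc₂]
  module

theorem exists_le_lineStabilizer_of_forall_pair_of_not_mem {G : Subgroup (SL2 K)}
    (hpair : ∀ A B, A ∈ G → B ∈ G → ∃ v ≠ 0, A ∈ lineStabilizer v ∧ B ∈ lineStabilizer v)
    {A : SL2 K} (hA : A ∈ G) {w : Fin 2 → K} (hw : A ∉ lineStabilizer w) :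
    ∃ v ≠ 0, G ≤ lineStabilizer v := by
  by_contra! hirr
  obtain ⟨v₁, hv₁, hAv₁, -⟩ := hpair A A hA hA
  obtain ⟨B₁, hB₁, hB₁v₁⟩ := SetLike.not_le_iff_exists.mp (hirr v₁ hv₁)
  obtain ⟨v₂, hv₂, hAv₂, hB₁v₂⟩ := hpair A B₁ hA hB₁
  have hli := linearIndependent_pair_of_lineStabilizer_ne hv₁ hv₂ fun h => hB₁v₁ (h ▸ hB₁v₂)
  have hmem (B : SL2 K) (hB : B ∈ G) : B ∈ lineStabilizer v₁ ∨ B ∈ lineStabilizer v₂ := by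
    obtain ⟨u, hu, hAu, hBu⟩ := hpair A B hA hB
    rcases lineStabilizer_eq_or_eq_of_mem hw hli hAv₁ hAv₂ hu hAu with h | h
    exacts [.inl (h ▸ hBu), .inr (h ▸ hBu)]
  obtain ⟨B₂, hB₂, hB₂v₂⟩ := SetLike.not_le_iff_exists.mp (hirr v₂ hv₂)
  have hB₂v₁ := (hmem B₂ hB₂).resolve_right hB₂v₂
  rcases hmem (B₁ * B₂) (G.mul_mem hB₁ hB₂) with h | h
  · exact hB₁v₁ (((lineStabilizer v₁).mul_mem_cancel_right hB₂v₁).mp h)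
  · exact hB₂v₂ (((lineStabilizer v₂).mul_mem_cancel_left hB₁v₂).mp h)

end SL2

theorem subgroup_reducible_iff_two_generator_subgroups_reducible_general
    {K : Type*} [Field K] (G : Subgroup (SL2 K)) :
    IsReducibleSubgroup G ↔
      ∀ A B : SL2 K, A ∈ G → B ∈ G →
        IsReducibleSubgroup (Subgroup.closure ({A, B} : Set (SL2 K))) := by
  have closure_le_iff (A B : SL2 K) (v : Fin 2 → K) :
      Subgroup.closure {A, B} ≤ lineStabilizer v ↔
        A ∈ lineStabilizer v ∧ B ∈ lineStabilizer v := by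
    rw [Subgroup.closure_le, Set.insert_subset_iff, Set.singleton_subset_iff, SetLike.mem_coe,
      SetLike.mem_coe]
  simp only [isReducibleSubgroup_iff, closure_le_iff]
  refine ⟨fun ⟨v, hv, hG⟩ A B hA hB => ⟨v, hv, hG hA, hG hB⟩, fun hpair => ?_⟩
  by_cases hscalar : ∃ A ∈ G, ∃ w, A ∉ lineStabilizer w
  · obtain ⟨A, hA, w, hw⟩ := hscalar
    exact exists_le_lineStabilizer_of_forall_pair_of_not_mem hpair hA hw
  · push Not at hscalar
    obtain ⟨v, hv⟩ := exists_ne (0 : Fin 2 → K)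
    exact ⟨v, hv, fun A hA => hscalar A hA v⟩

theorem subgroup_reducible_iff_two_generator_subgroups_reducible
    {K : Type*} [Field K] (hK : QuadClosed K) (G : Subgroup (SL2 K)) :
    IsReducibleSubgroup G ↔
      ∀ A B : SL2 K, A ∈ G → B ∈ G →
        IsReducibleSubgroup (Subgroup.closure ({A, B} : Set (SL2 K))) :=
  subgroup_reducible_iff_two_generator_subgroups_reducible_general G
end

section
/- Let K be a quadratically closed field and let F be the free group on three generators x₁, x₂, x₃. A tuple (t₁, t₂, t₃, t₁₂, t₂₃, t₃₁, t₁₂₃) ∈ K⁷ equals (tr ρ(x₁), tr ρ(x₂), tr ρ(x₃), tr ρ(x₁x₂), tr ρ(x₂x₃), tr ρ(x₃x₁), tr ρ(x₁x₂x₃)) for some representation ρ : F → SL(2,K) if and only if t₁₂₃² + (t₁t₂t₃ − t₁t₂₃ − t₂t₃₁ − t₃t₁₂)·t₁₂₃ + t₁² + t₂² + t₃² + t₁₂² + t₂₃² + t₃₁² + t₁₂t₂₃t₃₁ − t₁t₂t₁₂ − t₂t₃t₂₃ − t₃t₁t₃₁ − 4 = 0. -/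
/-!
Necessity is the Fricke identity, a polynomial identity in the entries of three `2 × 2`
matrices. For sufficiency, realize `(t₁, t₂, t₁₂)` by a pair `A, B ∈ SL(2, K)` and let
`Δ = t₁² + t₂² + t₁₂² - t₁ t₂ t₁₂ - 4 = tr [A, B] - 2`. If `Δ ≠ 0`, the linear forms
`C ↦ tr C, tr (A C), tr (B C), tr (A B C)` on `M₂(K)` are independent (their determinant is `Δ`),
so some matrix `C` has the prescribed four traces; for `det A = det B = 1` the Fricke identity
reads `F(t) = (1 - det C) Δ`, so `F(t) = 0` forces `det C = 1`. If `Δ = 0`, then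
`t₁₂ = x y + x⁻¹ y⁻¹` with `x + x⁻¹ = t₁`, `y + y⁻¹ = t₂`, the Fricke polynomial splits into two
linear factors in `t₁₂₃`, and each root is realized by upper triangular `A` and `B`.
-/

open Matrix

section FrickePolynomials

variable {R : Type*} [CommRing R]

def frickePoly (t₁ t₂ t₃ t₁₂ t₂₃ t₃₁ t₁₂₃ : R) : R :=
  t₁₂₃ ^ 2 + (t₁ * t₂ * t₃ - t₁ * t₂₃ - t₂ * t₃₁ - t₃ * t₁₂) * t₁₂₃ +
    t₁ ^ 2 + t₂ ^ 2 + t₃ ^ 2 + t₁₂ ^ 2 + t₂₃ ^ 2 + t₃₁ ^ 2 +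
    t₁₂ * t₂₃ * t₃₁ - t₁ * t₂ * t₁₂ - t₂ * t₃ * t₂₃ - t₃ * t₁ * t₃₁ - 4

/-- `tr [A, B] - 2` for `A, B ∈ SL(2)` with `tr A = t₁`, `tr B = t₂`, `tr (A * B) = t₁₂`; over an
algebraically closed field it vanishes iff `A` and `B` have a common eigenvector. -/
def pairDisc (t₁ t₂ t₁₂ : R) : R :=
  t₁ ^ 2 + t₂ ^ 2 + t₁₂ ^ 2 - t₁ * t₂ * t₁₂ - 4

end FrickePolynomials

namespace Matrix

variable {R : Type*} [CommRing R]

/-- The Fricke identity, homogenized by determinants so that it holds for all `2 × 2` matrices. -/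
theorem fricke_identity (A B C : Matrix (Fin 2) (Fin 2) R) :
    (A * B * C).trace ^ 2
      - (A.trace * (B * C).trace + B.trace * (C * A).trace + C.trace * (A * B).trace
        - A.trace * B.trace * C.trace) * (A * B * C).trace
      + B.det * C.det * A.trace ^ 2 + A.det * C.det * B.trace ^ 2 + A.det * B.det * C.trace ^ 2
      + C.det * (A * B).trace ^ 2 + A.det * (B * C).trace ^ 2 + B.det * (C * A).trace ^ 2
      + (A * B).trace * (B * C).trace * (C * A).trace
      - C.det * A.trace * B.trace * (A * B).trace - A.det * B.trace * C.trace * (B * C).trace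
      - B.det * C.trace * A.trace * (C * A).trace - 4 * A.det * B.det * C.det = 0 := by
  simp only [trace_fin_two, det_fin_two, mul_apply, Fin.sum_univ_two]
  ring

theorem frickePoly_trace {A B : Matrix (Fin 2) (Fin 2) R} (hA : A.det = 1) (hB : B.det = 1)
    (C : Matrix (Fin 2) (Fin 2) R) :
    frickePoly A.trace B.trace C.trace (A * B).trace (B * C).trace (C * A).trace
        (A * B * C).trace = (1 - C.det) * pairDisc A.trace B.trace (A * B).trace := by
  have h := fricke_identity A B C
  rw [hA, hB] at h
  unfold frickePoly pairDisc
  linear_combination h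

/-- The coefficients of `C ↦ (tr C, tr (A * C), tr (B * C), tr (A * B * C))` in the
coordinates `C 0 0, C 0 1, C 1 0, C 1 1`. -/
def tracePairingMatrix (A B : Matrix (Fin 2) (Fin 2) R) : Matrix (Fin 4) (Fin 4) R :=
  !![1, 0, 0, 1;
     A 0 0, A 1 0, A 0 1, A 1 1;
     B 0 0, B 1 0, B 0 1, B 1 1;
     (A * B) 0 0, (A * B) 1 0, (A * B) 0 1, (A * B) 1 1]

theorem tracePairingMatrix_mulVec (A B C : Matrix (Fin 2) (Fin 2) R) :
    tracePairingMatrix A B *ᵥ ![C 0 0, C 0 1, C 1 0, C 1 1] =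
      ![C.trace, (A * C).trace, (B * C).trace, (A * B * C).trace] := by
  ext i
  fin_cases i <;>
    simp [tracePairingMatrix, trace_fin_two, mul_apply] <;> ring

theorem det_tracePairingMatrix {A B : Matrix (Fin 2) (Fin 2) R} (hA : A.det = 1)
    (hB : B.det = 1) :
    (tracePairingMatrix A B).det = pairDisc A.trace B.trace (A * B).trace := by
  have : (tracePairingMatrix A B).det = B.det * A.trace ^ 2 + A.det * B.trace ^ 2
      + (A * B).trace ^ 2 - A.trace * B.trace * (A * B).trace - 4 * A.det * B.det := by
    rw [tracePairingMatrix, det_succ_row_zero]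
    simp [Fin.sum_univ_four, det_fin_three, Fin.succAbove, det_fin_two, trace_fin_two, mul_apply]
    ring
  rw [this, hA, hB, pairDisc]
  ring

theorem exists_trace_mul_eq {A B : Matrix (Fin 2) (Fin 2) R}
    (h : IsUnit (tracePairingMatrix A B).det) (τ₀ τ₁ τ₂ τ₃ : R) :
    ∃ C : Matrix (Fin 2) (Fin 2) R, C.trace = τ₀ ∧ (A * C).trace = τ₁ ∧ (B * C).trace = τ₂ ∧
      (A * B * C).trace = τ₃ := by
  let v := (tracePairingMatrix A B)⁻¹ *ᵥ ![τ₀, τ₁, τ₂, τ₃]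
  have hv : tracePairingMatrix A B *ᵥ v = ![τ₀, τ₁, τ₂, τ₃] := by
    rw [mulVec_mulVec, mul_nonsing_inv _ h, one_mulVec]
  let C : Matrix (Fin 2) (Fin 2) R := !![v 0, v 1; v 2, v 3]
  have hC : ![C 0 0, C 0 1, C 1 0, C 1 1] = v := by
    ext i; fin_cases i <;> rfl
  have hτ := tracePairingMatrix_mulVec A B C
  rw [hC, hv] at hτ
  exact ⟨C, (congrFun hτ 0).symm, (congrFun hτ 1).symm, (congrFun hτ 2).symm,
    (congrFun hτ 3).symm⟩

end Matrix

section TraceCoordinates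

variable {R : Type*} [CommRing R]

def HasTraces (A B C : SL2 R) (t₁ t₂ t₃ t₁₂ t₂₃ t₃₁ t₁₂₃ : R) : Prop :=
  trM A = t₁ ∧ trM B = t₂ ∧ trM C = t₃ ∧ trM (A * B) = t₁₂ ∧ trM (B * C) = t₂₃ ∧
    trM (C * A) = t₃₁ ∧ trM (A * B * C) = t₁₂₃

theorem exists_freeGroup_hom_iff_exists_hasTraces (t₁ t₂ t₃ t₁₂ t₂₃ t₃₁ t₁₂₃ : R) :
    (∃ ρ : FreeGroup (Fin 3) →* SL2 R,
        trM (ρ (FreeGroup.of 0)) = t₁ ∧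
        trM (ρ (FreeGroup.of 1)) = t₂ ∧
        trM (ρ (FreeGroup.of 2)) = t₃ ∧
        trM (ρ (FreeGroup.of 0 * FreeGroup.of 1)) = t₁₂ ∧
        trM (ρ (FreeGroup.of 1 * FreeGroup.of 2)) = t₂₃ ∧
        trM (ρ (FreeGroup.of 2 * FreeGroup.of 0)) = t₃₁ ∧
        trM (ρ (FreeGroup.of 0 * FreeGroup.of 1 * FreeGroup.of 2)) = t₁₂₃) ↔
      ∃ A B C : SL2 R, HasTraces A B C t₁ t₂ t₃ t₁₂ t₂₃ t₃₁ t₁₂₃ := by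
  constructor
  · rintro ⟨ρ, h⟩
    exact ⟨ρ (.of 0), ρ (.of 1), ρ (.of 2), by simpa only [HasTraces, map_mul] using h⟩
  · rintro ⟨A, B, C, h⟩
    exact ⟨FreeGroup.lift ![A, B, C], by simpa [HasTraces] using h⟩

theorem hasTraces_mk {A B C : Matrix (Fin 2) (Fin 2) R} (hA : A.det = 1) (hB : B.det = 1)
    (hC : C.det = 1) {t₁ t₂ t₃ t₁₂ t₂₃ t₃₁ t₁₂₃ : R} :
    HasTraces ⟨A, hA⟩ ⟨B, hB⟩ ⟨C, hC⟩ t₁ t₂ t₃ t₁₂ t₂₃ t₃₁ t₁₂₃ ↔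
      A.trace = t₁ ∧ B.trace = t₂ ∧ C.trace = t₃ ∧ (A * B).trace = t₁₂ ∧ (B * C).trace = t₂₃ ∧
        (C * A).trace = t₃₁ ∧ (A * B * C).trace = t₁₂₃ :=
  Iff.rfl

theorem frickePoly_eq_zero_of_hasTraces {A B C : SL2 R} {t₁ t₂ t₃ t₁₂ t₂₃ t₃₁ t₁₂₃ : R}
    (h : HasTraces A B C t₁ t₂ t₃ t₁₂ t₂₃ t₃₁ t₁₂₃) :
    frickePoly t₁ t₂ t₃ t₁₂ t₂₃ t₃₁ t₁₂₃ = 0 := by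
  obtain ⟨rfl, rfl, rfl, rfl, rfl, rfl, rfl⟩ := h
  simpa [trM] using Matrix.frickePoly_trace A.det_coe B.det_coe C

end TraceCoordinates

section QuadraticallyClosed

variable {K : Type*} [Field K]

theorem exists_add_inv_eq (hK : QuadClosed K) (t : K) : ∃ x : K, x ≠ 0 ∧ x + x⁻¹ = t := by
  obtain ⟨x, hx⟩ := hK (-t) 1
  have hx0 : x ≠ 0 := by rintro rfl; simp at hx
  refine ⟨x, hx0, ?_⟩
  field_simp
  linear_combination hx

theorem exists_pair_det_eq_one_with_traces (hK : QuadClosed K) (t₁ t₂ t₁₂ : K) :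
    ∃ A B : Matrix (Fin 2) (Fin 2) K, A.det = 1 ∧ B.det = 1 ∧
      A.trace = t₁ ∧ B.trace = t₂ ∧ (A * B).trace = t₁₂ := by
  obtain ⟨y, hy, rfl⟩ := exists_add_inv_eq hK t₂
  refine ⟨!![t₁, -1; 1, 0], !![y, t₁₂ - t₁ * y; 0, y⁻¹], ?_, ?_, ?_, ?_, ?_⟩ <;>
    simp [det_fin_two_of, trace_fin_two_of, hy]

theorem exists_hasTraces_upperTriangular {x y : K} (hx : x ≠ 0) (hy : y ≠ 0) (t₃ t₂₃ t₃₁ : K) :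
    ∃ A B C : SL2 K, HasTraces A B C (x + x⁻¹) (y + y⁻¹) t₃ (x * y + x⁻¹ * y⁻¹) t₂₃ t₃₁
      (x * t₂₃ + y⁻¹ * t₃₁ - x * y⁻¹ * t₃) := by
  have hA : det !![x, t₃₁ - x * t₃; 0, x⁻¹] = 1 := by simp [det_fin_two_of, hx]
  have hB : det !![y, t₂₃ - y * t₃; 0, y⁻¹] = 1 := by simp [det_fin_two_of, hy]
  have hC : det !![t₃, -1; 1, 0] = 1 := by simp [det_fin_two_of]
  refine ⟨_, _, _, (hasTraces_mk hA hB hC).2 ⟨?_, ?_, ?_, ?_, ?_, ?_, ?_⟩⟩ <;>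
    simp [trace_fin_two_of] <;> field_simp <;> ring

theorem exists_hasTraces_of_pairDisc_ne_zero (hK : QuadClosed K)
    {t₁ t₂ t₃ t₁₂ t₂₃ t₃₁ t₁₂₃ : K} (hF : frickePoly t₁ t₂ t₃ t₁₂ t₂₃ t₃₁ t₁₂₃ = 0)
    (hΔ : pairDisc t₁ t₂ t₁₂ ≠ 0) :
    ∃ A B C : SL2 K, HasTraces A B C t₁ t₂ t₃ t₁₂ t₂₃ t₃₁ t₁₂₃ := by
  obtain ⟨A, B, hA, hB, rfl, rfl, rfl⟩ := exists_pair_det_eq_one_with_traces hK t₁ t₂ t₁₂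
  have hM : IsUnit (tracePairingMatrix A B).det := by
    rw [det_tracePairingMatrix hA hB]
    exact hΔ.isUnit
  obtain ⟨C, rfl, hAC, rfl, rfl⟩ := exists_trace_mul_eq hM t₃ t₃₁ t₂₃ t₁₂₃
  rw [trace_mul_comm] at hAC
  subst hAC
  have hC : C.det = 1 := by
    have hF' := frickePoly_trace hA hB C
    rw [hF, eq_comm, mul_eq_zero, sub_eq_zero] at hF'
    exact (hF'.resolve_right hΔ).symm
  exact ⟨_, _, _, (hasTraces_mk hA hB hC).2 ⟨rfl, rfl, rfl, rfl, rfl, rfl, rfl⟩⟩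

theorem pairDisc_add_inv {x y : K} (hx : x ≠ 0) (hy : y ≠ 0) (t : K) :
    pairDisc (x + x⁻¹) (y + y⁻¹) t =
      (t - (x * y + x⁻¹ * y⁻¹)) * (t - (x * y⁻¹ + x⁻¹ * y)) := by
  unfold pairDisc
  field_simp
  ring

theorem frickePoly_add_inv {x y : K} (hx : x ≠ 0) (hy : y ≠ 0) (t₃ t₂₃ t₃₁ t : K) :
    frickePoly (x + x⁻¹) (y + y⁻¹) t₃ (x * y + x⁻¹ * y⁻¹) t₂₃ t₃₁ t =
      (t - (x * t₂₃ + y⁻¹ * t₃₁ - x * y⁻¹ * t₃)) *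
        (t - (x⁻¹ * t₂₃ + y * t₃₁ - x⁻¹ * y * t₃)) := by
  unfold frickePoly
  field_simp
  ring

theorem exists_hasTraces_of_pairDisc_eq_zero (hK : QuadClosed K)
    {t₁ t₂ t₃ t₁₂ t₂₃ t₃₁ t₁₂₃ : K} (hF : frickePoly t₁ t₂ t₃ t₁₂ t₂₃ t₃₁ t₁₂₃ = 0)
    (hΔ : pairDisc t₁ t₂ t₁₂ = 0) :
    ∃ A B C : SL2 K, HasTraces A B C t₁ t₂ t₃ t₁₂ t₂₃ t₃₁ t₁₂₃ := by
  obtain ⟨x, hx, rfl⟩ := exists_add_inv_eq hK t₁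
  obtain ⟨y, hy, rfl, rfl⟩ : ∃ y : K, y ≠ 0 ∧ y + y⁻¹ = t₂ ∧ x * y + x⁻¹ * y⁻¹ = t₁₂ := by
    obtain ⟨y, hy, rfl⟩ := exists_add_inv_eq hK t₂
    rw [pairDisc_add_inv hx hy, mul_eq_zero, sub_eq_zero, sub_eq_zero] at hΔ
    rcases hΔ with h | h
    · exact ⟨y, hy, rfl, h.symm⟩
    · exact ⟨y⁻¹, inv_ne_zero hy, by rw [inv_inv, add_comm], by rw [inv_inv, h]⟩
  rw [frickePoly_add_inv hx hy, mul_eq_zero, sub_eq_zero, sub_eq_zero] at hF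
  rcases hF with rfl | rfl
  · exact exists_hasTraces_upperTriangular hx hy t₃ t₂₃ t₃₁
  · -- `(x, y) ↦ (x⁻¹, y⁻¹)` fixes `t₁, t₂, t₁₂` and swaps the two roots
    have h := exists_hasTraces_upperTriangular (inv_ne_zero hx) (inv_ne_zero hy) t₃ t₂₃ t₃₁
    rwa [inv_inv, inv_inv, add_comm x⁻¹ x, add_comm y⁻¹ y, add_comm (x⁻¹ * y⁻¹)] at h

end QuadraticallyClosed

theorem character_variety_of_free_group_on_three_generators
    {K : Type*} [Field K] (hK : QuadClosed K)
    (t₁ t₂ t₃ t₁₂ t₂₃ t₃₁ t₁₂₃ : K) :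
    (∃ ρ : FreeGroup (Fin 3) →* SL2 K,
        trM (ρ (FreeGroup.of 0)) = t₁ ∧
        trM (ρ (FreeGroup.of 1)) = t₂ ∧
        trM (ρ (FreeGroup.of 2)) = t₃ ∧
        trM (ρ (FreeGroup.of 0 * FreeGroup.of 1)) = t₁₂ ∧
        trM (ρ (FreeGroup.of 1 * FreeGroup.of 2)) = t₂₃ ∧
        trM (ρ (FreeGroup.of 2 * FreeGroup.of 0)) = t₃₁ ∧
        trM (ρ (FreeGroup.of 0 * FreeGroup.of 1 * FreeGroup.of 2)) = t₁₂₃) ↔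
      t₁₂₃ ^ 2 + (t₁ * t₂ * t₃ - t₁ * t₂₃ - t₂ * t₃₁ - t₃ * t₁₂) * t₁₂₃ +
          t₁ ^ 2 + t₂ ^ 2 + t₃ ^ 2 + t₁₂ ^ 2 + t₂₃ ^ 2 + t₃₁ ^ 2 +
          t₁₂ * t₂₃ * t₃₁ - t₁ * t₂ * t₁₂ - t₂ * t₃ * t₂₃ - t₃ * t₁ * t₃₁ - 4 = 0 := by
  rw [exists_freeGroup_hom_iff_exists_hasTraces]
  constructor
  · rintro ⟨A, B, C, h⟩
    exact frickePoly_eq_zero_of_hasTraces h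
  · intro hF
    by_cases hΔ : pairDisc t₁ t₂ t₁₂ = 0
    · exact exists_hasTraces_of_pairDisc_eq_zero hK hF hΔ
    · exact exists_hasTraces_of_pairDisc_ne_zero hK hF hΔ
end

section
/- Let K be a quadratically closed field and A, B ∈ SL(2,K) with tr(A)² = 4. If the characteristic of K is not 2, then the subgroup generated by A and B is reducible if and only if tr(AB) = tr(A)·tr(B)/2; if the characteristic of K is 2, then the subgroup generated by A and B is reducible if and only if tr(AB) = tr(B). In particular, if the characteristic of K is not 2 and tr(A)² = tr(B)² = 4, then the subgroup generated by A and B is reducible if and only if tr(A)·tr(B)·tr(AB) = 8. -/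
section helpers
variable {K : Type*} [Field K]

private lemma prop_of_cross {v w : Fin 2 → K} (hv : v ≠ 0)
    (h : w 0 * v 1 = w 1 * v 0) : ∃ c : K, w = c • v := by
  have hv' : v 0 ≠ 0 ∨ v 1 ≠ 0 := by
    by_contra hc; push_neg at hc
    exact hv (funext fun i => by fin_cases i <;> simp [hc.1, hc.2])
  rcases hv' with h0 | h1
  · refine ⟨w 0 / v 0, funext fun i => ?_⟩
    fin_cases i <;> simp only [Fin.mk_zero, Fin.mk_one, Pi.smul_apply, smul_eq_mul] <;> field_simp
    linear_combination -h
  · refine ⟨w 1 / v 1, funext fun i => ?_⟩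
    fin_cases i <;> simp only [Fin.mk_zero, Fin.mk_one, Pi.smul_apply, smul_eq_mul] <;> field_simp
    linear_combination h

private lemma vec_unpack {N : Matrix (Fin 2) (Fin 2) K} {u : Fin 2 → K}
    (hu : N.mulVec u = 0) :
    (N 0 0 * u 0 + N 0 1 * u 1 = 0) ∧ (N 1 0 * u 0 + N 1 1 * u 1 = 0) := by
  constructor
  · have := congrFun hu 0
    simpa [Matrix.mulVec, dotProduct, Fin.sum_univ_two] using this
  · have := congrFun hu 1
    simpa [Matrix.mulVec, dotProduct, Fin.sum_univ_two] using this

private lemma matrix_ne_zero {N : Matrix (Fin 2) (Fin 2) K} (hN : N ≠ 0) :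
    ∃ i j, N i j ≠ 0 := by
  by_contra hc; push_neg at hc
  exact hN (by ext i j; simpa using hc i j)

private lemma cross_of_ker {N : Matrix (Fin 2) (Fin 2) K} (hN : N ≠ 0)
    {u u' : Fin 2 → K} (hu : N.mulVec u = 0) (hu' : N.mulVec u' = 0) :
    u' 0 * u 1 = u' 1 * u 0 := by
  obtain ⟨e0, e1⟩ := vec_unpack hu
  obtain ⟨e0', e1'⟩ := vec_unpack hu'
  obtain ⟨i, j, hij⟩ := matrix_ne_zero hN
  have key : N i j * (u' 0 * u 1 - u' 1 * u 0) = 0 := by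
    fin_cases i <;> fin_cases j <;> simp only [Fin.mk_zero, Fin.mk_one] at hij ⊢
    · linear_combination u 1 * e0' - u' 1 * e0
    · linear_combination u' 0 * e0 - u 0 * e0'
    · linear_combination u 1 * e1' - u' 1 * e1
    · linear_combination u' 0 * e1 - u 0 * e1'
  rcases mul_eq_zero.mp key with h | h
  · exact absurd h hij
  · linear_combination h

private lemma sq_eq_zero' {N : Matrix (Fin 2) (Fin 2) K}
    (htr : N.trace = 0) (hdet : N.det = 0) : N * N = 0 := by
  rw [Matrix.trace_fin_two] at htr
  rw [Matrix.det_fin_two] at hdet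
  ext i j
  fin_cases i <;> fin_cases j <;>
    simp only [Matrix.mul_apply, Fin.sum_univ_two, Matrix.zero_apply, Fin.mk_zero, Fin.mk_one]
  · linear_combination N 0 0 * htr - hdet
  · linear_combination N 0 1 * htr
  · linear_combination N 1 0 * htr
  · linear_combination N 1 1 * htr - hdet

private lemma nbn_id (N B : Matrix (Fin 2) (Fin 2) K) (hdet : N.det = 0) :
    N * B * N = (N * B).trace • N := by
  rw [Matrix.det_fin_two] at hdet
  ext i j
  fin_cases i <;> fin_cases j <;>
    simp only [Matrix.mul_apply, Fin.sum_univ_two, Matrix.smul_apply, Matrix.trace_fin_two,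
      smul_eq_mul, Fin.mk_zero, Fin.mk_one]
  · linear_combination (-(B 1 1)) * hdet
  · linear_combination B 0 1 * hdet
  · linear_combination B 1 0 * hdet
  · linear_combination (-(B 0 0)) * hdet

private lemma zero_of_mulVec {N : Matrix (Fin 2) (Fin 2) K}
    (h : ∀ w : Fin 2 → K, N.mulVec w = 0) : N = 0 := by
  ext i j
  have := congrFun (h (Pi.single j 1)) i
  rw [Matrix.mulVec_single] at this
  simpa using this

private lemma core (hK : QuadClosed K) (N B : Matrix (Fin 2) (Fin 2) K)
    (htr : N.trace = 0) (hdet : N.det = 0) (hB : B.det = 1) :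
    (∃ v : Fin 2 → K, v ≠ 0 ∧ (∃ c : K, N.mulVec v = c • v) ∧ (∃ c : K, B.mulVec v = c • v)) ↔
      (N * B).trace = 0 := by
  have hN2 : N * N = 0 := sq_eq_zero' htr hdet
  constructor
  · rintro ⟨v, hv, ⟨c, hc⟩, ⟨d, hd⟩⟩
    have hc0 : c = 0 := by
      have h1 : N.mulVec (N.mulVec v) = (c * c) • v := by
        rw [hc, Matrix.mulVec_smul, hc, smul_smul]
      rw [Matrix.mulVec_mulVec, hN2, Matrix.zero_mulVec] at h1
      have := (smul_eq_zero.mp h1.symm).resolve_right hv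
      exact (mul_self_eq_zero.mp this)
    have hNv : N.mulVec v = 0 := by rw [hc, hc0, zero_smul]
    by_cases hN : N = 0
    · simp [hN]
    · have hNBN : N * B * N = 0 := by
        apply zero_of_mulVec
        intro w
        have hNNw : N.mulVec (N.mulVec w) = 0 := by
          rw [Matrix.mulVec_mulVec, hN2, Matrix.zero_mulVec]
        obtain ⟨t, ht⟩ := prop_of_cross hv (cross_of_ker hN hNv hNNw)
        calc (N * B * N).mulVec w = N.mulVec (B.mulVec (N.mulVec w)) := by
              rw [Matrix.mulVec_mulVec, Matrix.mulVec_mulVec]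
          _ = t • (N.mulVec (B.mulVec v)) := by
              rw [ht, Matrix.mulVec_smul, Matrix.mulVec_smul]
          _ = 0 := by rw [hd, Matrix.mulVec_smul, hNv, smul_zero, smul_zero]
      have := nbn_id N B hdet
      rw [hNBN] at this
      rcases smul_eq_zero.mp this.symm with h | h
      · exact h
      · exact absurd h hN
  · intro h
    by_cases hN : N = 0
    · obtain ⟨lam, hlam⟩ := hK (-(B.trace)) 1
      have hdet' : (B - lam • 1).det = 0 := by
        rw [Matrix.det_fin_two]
        rw [Matrix.det_fin_two] at hB
        rw [Matrix.trace_fin_two] at hlam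
        simp only [Matrix.sub_apply, Matrix.smul_apply, Matrix.one_apply_eq,
          Matrix.one_apply_ne (by decide : (0 : Fin 2) ≠ 1),
          Matrix.one_apply_ne (by decide : (1 : Fin 2) ≠ 0), smul_eq_mul]
        linear_combination hlam + hB
      obtain ⟨v, hv, hv0⟩ := Matrix.exists_mulVec_eq_zero_iff.mpr hdet'
      refine ⟨v, hv, ⟨0, by simp [hN]⟩, ⟨lam, ?_⟩⟩
      have h1 : B.mulVec v - lam • v = 0 := by
        have := hv0
        rwa [Matrix.sub_mulVec, Matrix.smul_mulVec, Matrix.one_mulVec] at this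
      exact eq_of_sub_eq_zero h1
    · have hw : ∃ w, N.mulVec w ≠ 0 := by
        by_contra hc; push_neg at hc
        exact hN (zero_of_mulVec hc)
      obtain ⟨w, hw⟩ := hw
      set v := N.mulVec w with hvdef
      have hNv : N.mulVec v = 0 := by
        rw [hvdef, Matrix.mulVec_mulVec, hN2, Matrix.zero_mulVec]
      have hNBv : N.mulVec (B.mulVec v) = 0 := by
        rw [hvdef, Matrix.mulVec_mulVec, Matrix.mulVec_mulVec]
        rw [nbn_id N B hdet, h, zero_smul, Matrix.zero_mulVec]
      obtain ⟨c, hcv⟩ := prop_of_cross hw (cross_of_ker hN hNv hNBv)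
      exact ⟨v, hw, ⟨0, by rw [hNv, zero_smul]⟩, ⟨c, hcv⟩⟩

private lemma closure_red_iff (A B : SL2 K) :
    IsReducibleSubgroup (Subgroup.closure ({A, B} : Set (SL2 K))) ↔
      ∃ v : Fin 2 → K, v ≠ 0 ∧
        (∃ c : K, Matrix.mulVec (A : Matrix (Fin 2) (Fin 2) K) v = c • v) ∧
        (∃ c : K, Matrix.mulVec (B : Matrix (Fin 2) (Fin 2) K) v = c • v) := by
  constructor
  · rintro ⟨v, hv, h⟩
    exact ⟨v, hv, h A (Subgroup.subset_closure (by simp)),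
      h B (Subgroup.subset_closure (by simp))⟩
  · rintro ⟨v, hv, hA, hB⟩
    refine ⟨v, hv, fun g hg => ?_⟩
    induction hg using Subgroup.closure_induction with
    | mem x hx =>
      rcases hx with rfl | hx
      · exact hA
      · rcases hx with rfl
        exact hB
    | one => exact ⟨1, by simp⟩
    | mul x y hx hy ihx ihy =>
      obtain ⟨c, hc⟩ := ihx
      obtain ⟨d, hd⟩ := ihy
      refine ⟨d * c, ?_⟩
      rw [Matrix.SpecialLinearGroup.coe_mul, ← Matrix.mulVec_mulVec, hd,
        Matrix.mulVec_smul, hc, smul_smul]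
    | inv x hx ihx =>
      obtain ⟨c, hc⟩ := ihx
      have hxx : ((x⁻¹ : SL2 K) : Matrix (Fin 2) (Fin 2) K).mulVec
          (((x : SL2 K) : Matrix (Fin 2) (Fin 2) K).mulVec v) = v := by
        rw [Matrix.mulVec_mulVec, ← Matrix.SpecialLinearGroup.coe_mul, inv_mul_cancel,
          Matrix.SpecialLinearGroup.coe_one, Matrix.one_mulVec]
      rw [hc, Matrix.mulVec_smul] at hxx
      have hc0 : c ≠ 0 := by
        rintro rfl
        rw [zero_smul] at hxx
        exact hv hxx.symm
      have hfin : ((x⁻¹ : SL2 K) : Matrix (Fin 2) (Fin 2) K).mulVec v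
          = c⁻¹ • (c • ((x⁻¹ : SL2 K) : Matrix (Fin 2) (Fin 2) K).mulVec v) := by
        rw [smul_smul, inv_mul_cancel₀ hc0, one_smul]
      rw [hxx] at hfin
      exact ⟨c⁻¹, hfin⟩

private lemma main_eps (hK : QuadClosed K) (A B : SL2 K) (ε : K) (heps : ε * ε = 1)
    (htrA : trM A = 2 * ε) :
    IsReducibleSubgroup (Subgroup.closure ({A, B} : Set (SL2 K))) ↔
      trM (A * B) = ε * trM B := by
  set N : Matrix (Fin 2) (Fin 2) K := ε • (A : Matrix (Fin 2) (Fin 2) K) - 1 with hNdef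
  have htA : Matrix.trace ((A : Matrix (Fin 2) (Fin 2) K)) = 2 * ε := htrA
  have htrN : N.trace = 0 := by
    rw [hNdef, Matrix.trace_sub, Matrix.trace_smul, Matrix.trace_one, htA]
    simp only [Fintype.card_fin, Nat.cast_ofNat, smul_eq_mul]
    linear_combination 2 * heps
  have hdA := Matrix.SpecialLinearGroup.det_coe A
  have hdetN : N.det = 0 := by
    rw [Matrix.det_fin_two]
    rw [Matrix.det_fin_two] at hdA
    have ht2 : (A : Matrix (Fin 2) (Fin 2) K) 0 0 + (A : Matrix (Fin 2) (Fin 2) K) 1 1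
        = 2 * ε := by rw [← Matrix.trace_fin_two]; exact htA
    simp only [hNdef, Matrix.sub_apply, Matrix.smul_apply, Matrix.one_apply_eq,
      Matrix.one_apply_ne (by decide : (0 : Fin 2) ≠ 1),
      Matrix.one_apply_ne (by decide : (1 : Fin 2) ≠ 0), smul_eq_mul]
    linear_combination (ε * ε) * hdA - ε * ht2 - heps
  have hdB : (B : Matrix (Fin 2) (Fin 2) K).det = 1 := Matrix.SpecialLinearGroup.det_coe B
  have htrNB : (N * (B : Matrix (Fin 2) (Fin 2) K)).trace = ε * trM (A * B) - trM B := by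
    rw [hNdef, sub_mul, smul_mul_assoc, one_mul, Matrix.trace_sub, Matrix.trace_smul,
      smul_eq_mul]
    have : trM (A * B) =
        Matrix.trace ((A : Matrix (Fin 2) (Fin 2) K) * (B : Matrix (Fin 2) (Fin 2) K)) := by
      rw [trM, Matrix.SpecialLinearGroup.coe_mul]
    rw [this]; rfl
  rw [closure_red_iff]
  have hiff : ∀ v : Fin 2 → K,
      (∃ c : K, Matrix.mulVec (A : Matrix (Fin 2) (Fin 2) K) v = c • v) ↔
      (∃ c : K, N.mulVec v = c • v) := by
    intro v
    constructor
    · rintro ⟨c, hc⟩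
      refine ⟨ε * c - 1, ?_⟩
      rw [hNdef, Matrix.sub_mulVec, Matrix.smul_mulVec, hc, Matrix.one_mulVec,
        smul_smul, sub_smul, one_smul]
    · rintro ⟨c, hc⟩
      refine ⟨ε * (c + 1), ?_⟩
      rw [hNdef, Matrix.sub_mulVec, Matrix.smul_mulVec, Matrix.one_mulVec,
        sub_eq_iff_eq_add] at hc
      have h1 : ε • Matrix.mulVec (A : Matrix (Fin 2) (Fin 2) K) v = (c + 1) • v := by
        rw [hc, add_smul, one_smul]
      calc Matrix.mulVec (A : Matrix (Fin 2) (Fin 2) K) v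
          = (ε * ε) • Matrix.mulVec (A : Matrix (Fin 2) (Fin 2) K) v := by
            rw [heps, one_smul]
        _ = ε • (ε • Matrix.mulVec (A : Matrix (Fin 2) (Fin 2) K) v) := by rw [smul_smul]
        _ = ε • ((c + 1) • v) := by rw [h1]
        _ = (ε * (c + 1)) • v := by rw [smul_smul]
  have := core hK N (B : Matrix (Fin 2) (Fin 2) K) htrN hdetN hdB
  constructor
  · rintro ⟨v, hv, hAv, hBv⟩
    have h0 := this.mp ⟨v, hv, (hiff v).mp hAv, hBv⟩
    rw [htrNB] at h0
    linear_combination ε * h0 - trM (A * B) * heps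
  · intro h
    have h0 : (N * (B : Matrix (Fin 2) (Fin 2) K)).trace = 0 := by
      rw [htrNB]
      linear_combination ε * h + trM B * heps
    obtain ⟨v, hv, hNv, hBv⟩ := this.mpr h0
    exact ⟨v, hv, (hiff v).mpr hNv, hBv⟩

end helpers

theorem reducibility_criterion_trace_square_four
    {K : Type*} [Field K] (hK : QuadClosed K) (A B : SL2 K) (hA : trM A ^ 2 = 4) :
    (ringChar K ≠ 2 →
      (IsReducibleSubgroup (Subgroup.closure ({A, B} : Set (SL2 K))) ↔
        trM (A * B) = trM A * trM B / 2)) ∧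
    (ringChar K = 2 →
      (IsReducibleSubgroup (Subgroup.closure ({A, B} : Set (SL2 K))) ↔
        trM (A * B) = trM B)) ∧
    (ringChar K ≠ 2 → trM B ^ 2 = 4 →
      (IsReducibleSubgroup (Subgroup.closure ({A, B} : Set (SL2 K))) ↔
        trM A * trM B * trM (A * B) = 8)) := by
  have P1 : ringChar K ≠ 2 →
      (IsReducibleSubgroup (Subgroup.closure ({A, B} : Set (SL2 K))) ↔
        trM (A * B) = trM A * trM B / 2) := by
    intro hchar
    have h2 : (2 : K) ≠ 0 := Ring.two_ne_zero hchar
    have heps : (trM A / 2) * (trM A / 2) = 1 := by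
      field_simp
      linear_combination hA
    have htrA : trM A = 2 * (trM A / 2) := by field_simp
    rw [main_eps hK A B _ heps htrA,
      show trM A / 2 * trM B = trM A * trM B / 2 from by ring]
  refine ⟨P1, ?_, ?_⟩
  · intro hchar
    have inst : CharP K 2 := ringChar.eq_iff.mp hchar
    have h2 : (2 : K) = 0 := by exact_mod_cast CharP.cast_eq_zero K 2
    have htrA0 : trM A = 0 := by
      have hsq : trM A ^ 2 = 0 := by rw [hA]; linear_combination 2 * h2
      exact pow_eq_zero_iff (by norm_num : (2:ℕ) ≠ 0) |>.mp hsq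
    have htrA : trM A = 2 * 1 := by rw [htrA0, mul_one]; exact h2.symm
    rw [main_eps hK A B 1 (one_mul 1) htrA, one_mul]
  · intro hchar hB2
    rw [P1 hchar]
    have h2 : (2 : K) ≠ 0 := Ring.two_ne_zero hchar
    constructor
    · intro h
      rw [h]
      field_simp
      linear_combination trM B ^ 2 * hA + 4 * hB2
    · intro h
      have h16 : (16 : K) ≠ 0 := by
        have : (16 : K) = 2 ^ 4 := by norm_num
        rw [this]
        exact pow_ne_zero 4 h2
      have hxy : trM A * trM B ≠ 0 := by
        intro h0
        rw [h0, zero_mul] at h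
        have h8 : (8 : K) = 0 := h.symm
        have : (16 : K) = 0 := by linear_combination 2 * h8
        exact h16 this
      have key : (trM (A * B) * 2 - trM A * trM B) * (trM A * trM B) = 0 := by
        linear_combination 2 * h - trM B ^ 2 * hA - 4 * hB2
      rcases mul_eq_zero.mp key with hk | hk
      · field_simp
        linear_combination hk
      · exact absurd hk hxy
end

section
/- Let K be a field, let G be a group generated by a subset S, let ρ : G → SL(2,K) be a representation, and let x ∈ G. If tr(ρ(x)) = 2 and tr(ρ(x·s·x⁻¹·s⁻¹)) = 2 for every s ∈ S, then either ρ(x) is the identity matrix or ρ is reducible. -/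
/-- The Fricke-type trace identity: if `tr A = 2` and `tr (A B A⁻¹ B⁻¹) = 2` then
`tr (A B) = tr B`, written out in entries. -/
private lemma key_trace {K : Type*} [Field K] (A B : Matrix (Fin 2) (Fin 2) K)
    (hA : A.det = 1) (hB : B.det = 1) (htA : A.trace = 2)
    (h : (A * B * A.adjugate * B.adjugate).trace = 2) :
    A 0 0 * B 0 0 + A 0 1 * B 1 0 + A 1 0 * B 0 1 + A 1 1 * B 1 1 = B 0 0 + B 1 1 := by
  rw [Matrix.det_fin_two] at hA hB
  rw [Matrix.trace_fin_two] at htA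
  have hsq : (A 0 0 * B 0 0 + A 0 1 * B 1 0 + A 1 0 * B 0 1 + A 1 1 * B 1 1
      - (B 0 0 + B 1 1)) ^ 2 = 0 := by
    rw [Matrix.adjugate_fin_two, Matrix.adjugate_fin_two] at h
    simp [Matrix.trace_fin_two, Matrix.mul_apply, Fin.sum_univ_two] at h
    linear_combination h - ((B 0 0 + B 1 1) ^ 2 - 2) * hA
      - (A 0 0 ^ 2 + A 1 1 ^ 2 + 2 * A 0 1 * A 1 0) * hB
      - (A 0 0 + A 1 1 + 2 - (B 0 0 + B 1 1) *
          (A 0 0 * B 0 0 + A 0 1 * B 1 0 + A 1 0 * B 0 1 + A 1 1 * B 1 1)) * htA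
  have := pow_eq_zero_iff (n := 2) (by norm_num) |>.mp hsq
  linear_combination this

/-- If every generator preserves the line spanned by `v`, so does the whole group. -/
private lemma reducible_of_gen {K : Type*} [Field K] {G : Type*} [Group G] (S : Set G)
    (hS : Subgroup.closure S = ⊤) (ρ : G →* SL2 K) (v : Fin 2 → K) (hv : v ≠ 0)
    (h : ∀ s ∈ S, ∃ c : K,
      Matrix.mulVec ((ρ s : SL2 K) : Matrix (Fin 2) (Fin 2) K) v = c • v) :
    IsReducibleRep ρ := by
  have hback : ∀ g : G,
      Matrix.mulVec (((ρ g)⁻¹ : SL2 K) : Matrix (Fin 2) (Fin 2) K)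
        (Matrix.mulVec ((ρ g : SL2 K) : Matrix (Fin 2) (Fin 2) K) v) = v := by
    intro g
    rw [Matrix.mulVec_mulVec, ← Matrix.SpecialLinearGroup.coe_mul, inv_mul_cancel,
      Matrix.SpecialLinearGroup.coe_one, Matrix.one_mulVec]
  let H : Subgroup G :=
    { carrier := {g | ∃ c : K,
        Matrix.mulVec ((ρ g : SL2 K) : Matrix (Fin 2) (Fin 2) K) v = c • v}
      one_mem' := ⟨1, by simp⟩
      mul_mem' := by
        rintro g g' ⟨cg, hg⟩ ⟨cg', hg'⟩
        refine ⟨cg * cg', ?_⟩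
        rw [map_mul, Matrix.SpecialLinearGroup.coe_mul, ← Matrix.mulVec_mulVec, hg',
          Matrix.mulVec_smul, hg, smul_smul, mul_comm]
      inv_mem' := by
        rintro g ⟨c, hg⟩
        have h2 := hback g
        rw [hg, Matrix.mulVec_smul] at h2
        have hne : c ≠ 0 := by
          rintro rfl
          exact hv (by rw [← h2, zero_smul])
        refine ⟨c⁻¹, ?_⟩
        rw [map_inv]
        conv_rhs => rw [← h2]
        rw [smul_smul, inv_mul_cancel₀ hne, one_smul] }
  have hle : Subgroup.closure S ≤ H := (Subgroup.closure_le H).mpr h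
  refine ⟨v, hv, fun g => ?_⟩
  exact hle (by rw [hS]; trivial)

theorem trace_two_commutators_implies_id_or_reducible
    {K : Type*} [Field K] {G : Type*} [Group G] (S : Set G)
    (hS : Subgroup.closure S = ⊤) (ρ : G →* SL2 K) (x : G)
    (hx : trM (ρ x) = 2)
    (hcomm : ∀ s ∈ S, trM (ρ (x * s * x⁻¹ * s⁻¹)) = 2) :
    ρ x = 1 ∨ IsReducibleRep ρ := by
  by_cases hid : ρ x = 1
  · exact Or.inl hid
  right
  set A : Matrix (Fin 2) (Fin 2) K := ((ρ x : SL2 K) : Matrix (Fin 2) (Fin 2) K) with hA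
  have hdA : A.det = 1 := (ρ x).2
  have hdet : A 0 0 * A 1 1 - A 0 1 * A 1 0 = 1 := by
    rw [Matrix.det_fin_two] at hdA; exact hdA
  have htr2 : A 0 0 + A 1 1 = 2 := by
    have := hx
    rw [trM, Matrix.trace_fin_two] at this
    exact this
  -- the key trace condition for each generator
  have hgen : ∀ s ∈ S,
      A 0 0 * ((ρ s : SL2 K) : Matrix (Fin 2) (Fin 2) K) 0 0
      + A 0 1 * ((ρ s : SL2 K) : Matrix (Fin 2) (Fin 2) K) 1 0
      + A 1 0 * ((ρ s : SL2 K) : Matrix (Fin 2) (Fin 2) K) 0 1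
      + A 1 1 * ((ρ s : SL2 K) : Matrix (Fin 2) (Fin 2) K) 1 1
      = ((ρ s : SL2 K) : Matrix (Fin 2) (Fin 2) K) 0 0
        + ((ρ s : SL2 K) : Matrix (Fin 2) (Fin 2) K) 1 1 := by
    intro s hs
    set B : Matrix (Fin 2) (Fin 2) K := ((ρ s : SL2 K) : Matrix (Fin 2) (Fin 2) K) with hB
    have hdB : B.det = 1 := (ρ s).2
    have htA : A.trace = 2 := hx
    have hc := hcomm s hs
    have hmat : trM (ρ (x * s * x⁻¹ * s⁻¹)) = (A * B * A.adjugate * B.adjugate).trace := by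
      rw [trM, map_mul, map_mul, map_mul, map_inv, map_inv,
        Matrix.SpecialLinearGroup.coe_mul, Matrix.SpecialLinearGroup.coe_mul,
        Matrix.SpecialLinearGroup.coe_mul, Matrix.SpecialLinearGroup.coe_inv,
        Matrix.SpecialLinearGroup.coe_inv]
    rw [hmat] at hc
    exact key_trace A B hdA hdB htA hc
  by_cases hb : A 0 1 = 0
  · -- then A 0 0 = A 1 1 = 1 and A 1 0 ≠ 0 ; invariant vector ![0,1]
    have ha1 : A 0 0 = 1 := by
      have hsq : (A 0 0 - 1) ^ 2 = 0 := by
        linear_combination -hdet + A 0 0 * htr2 - A 1 0 * hb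
      have := pow_eq_zero_iff (n := 2) (by norm_num) |>.mp hsq
      linear_combination this
    have hd1 : A 1 1 = 1 := by linear_combination htr2 - ha1
    have hc0 : A 1 0 ≠ 0 := by
      intro h10
      apply hid
      have hone : A = 1 := by
        ext i j
        fin_cases i <;> fin_cases j <;>
          simp [ha1, hb, h10, hd1, Matrix.one_apply]
      exact Subtype.ext hone
    refine reducible_of_gen S hS ρ ![0, 1] (fun h0 => by simpa using congrFun h0 1) ?_
    intro s hs
    have hk := hgen s hs
    set B : Matrix (Fin 2) (Fin 2) K := ((ρ s : SL2 K) : Matrix (Fin 2) (Fin 2) K) with hB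
    have hq : B 0 1 = 0 := by
      have : A 1 0 * B 0 1 = 0 := by linear_combination hk - B 0 0 * ha1 - B 1 1 * hd1 - B 1 0 * hb
      exact (mul_eq_zero.mp this).resolve_left hc0
    refine ⟨B 1 1, ?_⟩
    funext i
    fin_cases i <;>
      simp [Matrix.mulVec, dotProduct, Fin.sum_univ_two, hq]
  · -- invariant vector ![A 0 1, 1 - A 0 0]
    refine reducible_of_gen S hS ρ ![A 0 1, 1 - A 0 0]
      (fun h0 => hb (by simpa using congrFun h0 0)) ?_
    intro s hs
    have hk := hgen s hs
    set B : Matrix (Fin 2) (Fin 2) K := ((ρ s : SL2 K) : Matrix (Fin 2) (Fin 2) K) with hB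
    refine ⟨(B 0 0 * A 0 1 + B 0 1 * (1 - A 0 0)) / A 0 1, ?_⟩
    funext i
    fin_cases i
    · simp [Matrix.mulVec, dotProduct, Fin.sum_univ_two]
      field_simp
    · simp [Matrix.mulVec, dotProduct, Fin.sum_univ_two]
      rw [div_mul_eq_mul_div, eq_comm, div_eq_iff hb, eq_comm]
      linear_combination A 0 1 * hk + B 0 1 * hdet - (B 0 1 * A 0 0 + A 0 1 * B 1 1) * htr2
end
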